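/- arXiv:1205.2750 — 7 statements merged into one kernel-verified Lean document; each statement's English description precedes it below -/
import Mathlib

section
/- Energy conservation for the multi-adaptive continuous Galerkin method: Let N ≥ 1, T > 0, and let P : ℝ^N → ℝ be continuously differentiable. For each i = 1,…,N let 0 = t_{i,0} < … < t_{i,M_i} = T be a partition of [0,T] with subintervals I_{ij} = (t_{i,j−1}, t_{ij}) and polynomial degrees q_{ij} ≥ 1. Let U, V : [0,T] → ℝ^N be continuous functions such that for every i, j the restrictions of U_i and V_i to I_{ij} are polynomials of degree ≤ q_{ij}, and suppose the Galerkin equations hold: for all i, j and all polynomials w of degree ≤ q_{ij} − 1, ∫_{I_{ij}} (U̇_i(t) − V_i(t)) w(t) dt = 0 and ∫_{I_{ij}} (V̇_i(t) + (∂P/∂x_i)(U(t))) w(t) dt = 0. Then at every synchronized time-level t̄ ∈ (0,T] (i.e. every t̄ such that for each i there is some j with t̄ = t_{ij}) the total energy is conserved: (1/2)‖V(t̄)‖² + P(U(t̄)) = (1/2)‖V(0)‖² + P(U(0)). -/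
/-!
On each interval `I_ij`, `V̇_i` and `U̇_i` are polynomials of degree `≤ q_ij - 1`, so they are
admissible test functions: testing the first Galerkin equation with `V̇_i` and the second with
`U̇_i` and subtracting gives `∫_{I_ij} V_i V̇_i + ∂_i P(U) U̇_i = 0`, i.e. the increment of
`V_i² / 2` over `I_ij` is `-∫_{I_ij} ∂_i P(U) U̇_i`. Telescoping along the `i`-th partition up to
the synchronized level `t̄` and summing over `i`, the integrands add up to `(P ∘ U)'`, which exists
off the countably many nodes; the fundamental theorem of calculus turns that integral into
`P(U(t̄)) - P(U(0))`.
-/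

open MeasureTheory intervalIntegral Set

lemma Polynomial.hasDerivAt_of_eqOn_Icc {u : ℝ → ℝ} {p : Polynomial ℝ} {a b x : ℝ}
    (hu : ∀ s ∈ Icc a b, u s = p.eval s) (hx : x ∈ Ioo a b) :
    HasDerivAt u (p.derivative.eval x) x :=
  (p.hasDerivAt x).congr_of_eventuallyEq <| Filter.eventuallyEq_of_mem (isOpen_Ioo.mem_nhds hx)
    fun s hs => hu s (Ioo_subset_Icc_self hs)

lemma Polynomial.integral_eval_mul_eval_derivative (r : Polynomial ℝ) (a b : ℝ) :
    ∫ s in a..b, r.eval s * r.derivative.eval s = r.eval b ^ 2 / 2 - r.eval a ^ 2 / 2 := by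
  refine integral_eq_sub_of_hasDerivAt (f := fun s => r.eval s ^ 2 / 2) (fun x _ => ?_)
    ((r.continuous.mul r.derivative.continuous).intervalIntegrable a b)
  refine (((r.hasDerivAt x).pow 2).div_const 2).congr_deriv ?_
  ring

lemma hasDerivAt_comp_euclideanSpace {ι : Type*} [Fintype ι] [DecidableEq ι]
    {P : EuclideanSpace ℝ ι → ℝ} {U : ℝ → EuclideanSpace ℝ ι} {u' : ι → ℝ} {x : ℝ}
    (hP : DifferentiableAt ℝ P (U x))
    (hU : ∀ i, HasDerivAt (fun s => U s i) (u' i) x) :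
    HasDerivAt (fun s => P (U s))
      (∑ i, fderiv ℝ P (U x) (EuclideanSpace.single i 1) * u' i) x := by
  have hU' : HasDerivAt U (WithLp.toLp 2 u') x := by
    exact (PiLp.hasFDerivAt_toLp (𝕜 := ℝ) 2 (U x).ofLp).comp_hasDerivAt x (hasDerivAt_pi.2 hU)
  refine (hP.hasFDerivAt.comp_hasDerivAt x hU').congr_deriv ?_
  rw [← (EuclideanSpace.basisFun ι ℝ).sum_repr (WithLp.toLp 2 u')]
  simp [mul_comm]

lemma exists_mem_Ioo_of_notMem_range {t : ℕ → ℝ} {M : ℕ} {x : ℝ} (h0 : t 0 < x) (hM : x < t M)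
    (hx : x ∉ range t) : ∃ j < M, x ∈ Ioo (t j) (t (j + 1)) := by
  classical
  set j := Nat.findGreatest (fun j => t j < x) M
  have hj : t j < x := Nat.findGreatest_spec (P := fun j => t j < x) (Nat.zero_le M) h0
  have hjM : j < M := (Nat.findGreatest_le M).lt_of_ne fun h => hM.not_gt (h ▸ hj)
  have hj1 : ¬ t (j + 1) < x := Nat.findGreatest_is_greatest (Nat.lt_succ_self j) hjM
  exact ⟨j, hjM, hj, (not_lt.1 hj1).lt_of_ne fun h => hx ⟨j + 1, h.symm⟩⟩

lemma Icc_succ_subset_Icc_of_le_succ {t : ℕ → ℝ} {M j : ℕ} (ht : ∀ j < M, t j ≤ t (j + 1))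
    (hj : j < M) : Icc (t j) (t (j + 1)) ⊆ Icc (t 0) (t M) := by
  have hmono : MonotoneOn t (Iic M) :=
    monotoneOn_of_le_succ ordConnected_Iic fun k _ _ hk => by
      rw [Order.succ_eq_add_one] at hk ⊢
      exact ht k (Nat.lt_of_succ_le hk)
  exact Icc_subset_Icc (hmono (by simp) (mem_Iic.2 hj.le) (Nat.zero_le j))
    (hmono (mem_Iic.2 hj) (mem_Iic.2 le_rfl) hj)

lemma galerkin_energy_interval {a b : ℝ} (hab : a ≤ b) {q : ℕ} {u v g : ℝ → ℝ}
    (hg : ContinuousOn g (Icc a b))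
    (hu : ∃ p : Polynomial ℝ, p.natDegree ≤ q ∧ ∀ s ∈ Icc a b, u s = p.eval s)
    (hv : ∃ p : Polynomial ℝ, p.natDegree ≤ q ∧ ∀ s ∈ Icc a b, v s = p.eval s)
    (hGalU : ∀ w : Polynomial ℝ, w.natDegree ≤ q - 1 →
      ∫ s in a..b, (deriv u s - v s) * w.eval s = 0)
    (hGalV : ∀ w : Polynomial ℝ, w.natDegree ≤ q - 1 →
      ∫ s in a..b, (deriv v s + g s) * w.eval s = 0) :
    IntervalIntegrable (fun s => g s * deriv u s) volume a b ∧
      1 / 2 * v b ^ 2 - 1 / 2 * v a ^ 2 + ∫ s in a..b, g s * deriv u s = 0 := by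
  obtain ⟨p, hp, hup⟩ := hu
  obtain ⟨r, hr, hvr⟩ := hv
  have hu' : EqOn (deriv u) (fun s => p.derivative.eval s) (Ioo a b) :=
    fun x hx => (p.hasDerivAt_of_eqOn_Icc hup hx).deriv
  have hv' : EqOn (deriv v) (fun s => r.derivative.eval s) (Ioo a b) :=
    fun x hx => (r.hasDerivAt_of_eqOn_Icc hvr hx).deriv
  have hdeg : ∀ f : Polynomial ℝ, f.natDegree ≤ q → f.derivative.natDegree ≤ q - 1 :=
    fun f hf => (Polynomial.natDegree_derivative_le f).trans (Nat.sub_le_sub_right hf 1)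
  have hp'r' : IntervalIntegrable (fun s => p.derivative.eval s * r.derivative.eval s) volume a b :=
    (p.derivative.continuous.mul r.derivative.continuous).intervalIntegrable a b
  have hrr' : IntervalIntegrable (fun s => r.eval s * r.derivative.eval s) volume a b :=
    (r.continuous.mul r.derivative.continuous).intervalIntegrable a b
  have hgp' : IntervalIntegrable (fun s => g s * p.derivative.eval s) volume a b :=
    (hg.mul p.derivative.continuous.continuousOn).intervalIntegrable_of_Icc hab
  have hU : (∫ s in a..b, p.derivative.eval s * r.derivative.eval s) -
      ∫ s in a..b, r.eval s * r.derivative.eval s = 0 := by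
    rw [← integral_sub hp'r' hrr', ← hGalU _ (hdeg r hr)]
    refine integral_congr_Ioo_of_le hab fun x hx => ?_
    simp only [hu' hx, hvr x (Ioo_subset_Icc_self hx)]
    ring
  have hV : (∫ s in a..b, p.derivative.eval s * r.derivative.eval s) +
      ∫ s in a..b, g s * p.derivative.eval s = 0 := by
    rw [← integral_add hp'r' hgp', ← hGalV _ (hdeg p hp)]
    refine integral_congr_Ioo_of_le hab fun x hx => ?_
    simp only [hv' hx]
    ring
  have hgu' : EqOn (fun s => g s * p.derivative.eval s) (fun s => g s * deriv u s) (Ioo a b) :=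
    fun x hx => by simp only [hu' hx]
  refine ⟨hgp'.congr_uIoo (uIoo_of_le hab ▸ hgu'), ?_⟩
  rw [← integral_congr_Ioo_of_le hab hgu', hvr b (right_mem_Icc.2 hab),
    hvr a (left_mem_Icc.2 hab)]
  linarith [r.integral_eval_mul_eval_derivative a b]

lemma galerkin_energy_partition {M : ℕ} {t : ℕ → ℝ} {q : ℕ → ℕ} {u v g : ℝ → ℝ}
    (ht : ∀ j < M, t j ≤ t (j + 1)) (hg : ContinuousOn g (Icc (t 0) (t M)))
    (hu : ∀ j < M, ∃ p : Polynomial ℝ, p.natDegree ≤ q j ∧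
      ∀ s ∈ Icc (t j) (t (j + 1)), u s = p.eval s)
    (hv : ∀ j < M, ∃ p : Polynomial ℝ, p.natDegree ≤ q j ∧
      ∀ s ∈ Icc (t j) (t (j + 1)), v s = p.eval s)
    (hGalU : ∀ j < M, ∀ w : Polynomial ℝ, w.natDegree ≤ q j - 1 →
      ∫ s in (t j)..(t (j + 1)), (deriv u s - v s) * w.eval s = 0)
    (hGalV : ∀ j < M, ∀ w : Polynomial ℝ, w.natDegree ≤ q j - 1 →
      ∫ s in (t j)..(t (j + 1)), (deriv v s + g s) * w.eval s = 0)
    {k : ℕ} (hk : k ≤ M) :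
    IntervalIntegrable (fun s => g s * deriv u s) volume (t 0) (t k) ∧
      1 / 2 * v (t k) ^ 2 - 1 / 2 * v (t 0) ^ 2 + ∫ s in (t 0)..(t k), g s * deriv u s = 0 := by
  have step : ∀ j < k, IntervalIntegrable (fun s => g s * deriv u s) volume (t j) (t (j + 1)) ∧
      1 / 2 * v (t (j + 1)) ^ 2 - 1 / 2 * v (t j) ^ 2 +
        ∫ s in (t j)..(t (j + 1)), g s * deriv u s = 0 := fun j hj =>
    have hjM : j < M := hj.trans_le hk
    galerkin_energy_interval (ht j hjM) (hg.mono (Icc_succ_subset_Icc_of_le_succ ht hjM))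
      (hu j hjM) (hv j hjM) (hGalU j hjM) (hGalV j hjM)
  refine ⟨IntervalIntegrable.trans_iterate fun j hj => (step j hj).1, ?_⟩
  rw [← sum_integral_adjacent_intervals fun j hj => (step j hj).1,
    Finset.sum_congr rfl fun j hj => eq_neg_of_add_eq_zero_right (step j (Finset.mem_range.1 hj)).2,
    Finset.sum_neg_distrib, Finset.sum_range_sub fun j => 1 / 2 * v (t j) ^ 2, add_neg_cancel]

lemma hasDerivAt_comp_of_notMem_nodes {ι : Type*} [Fintype ι] [DecidableEq ι]
    {P : EuclideanSpace ℝ ι → ℝ} {U : ℝ → EuclideanSpace ℝ ι} {M : ι → ℕ} {t : ι → ℕ → ℝ}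
    {x : ℝ} (hP : DifferentiableAt ℝ P (U x))
    (hU : ∀ i, ∀ j < M i, ∃ p : Polynomial ℝ, ∀ s ∈ Icc (t i j) (t i (j + 1)), U s i = p.eval s)
    (hx0 : ∀ i, t i 0 < x) (hxM : ∀ i, x < t i (M i)) (hx : x ∉ ⋃ i, range (t i)) :
    HasDerivAt (fun s => P (U s))
      (∑ i, fderiv ℝ P (U x) (EuclideanSpace.single i 1) * deriv (fun r => U r i) x) x := by
  refine hasDerivAt_comp_euclideanSpace hP fun i => ?_
  obtain ⟨j, hj, hxj⟩ :=
    exists_mem_Ioo_of_notMem_range (hx0 i) (hxM i) fun h => hx (mem_iUnion.2 ⟨i, h⟩)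
  obtain ⟨p, hp⟩ := hU i j hj
  exact (p.hasDerivAt_of_eqOn_Icc hp hxj).differentiableAt.hasDerivAt

theorem mcG_energy_conservation_general
    (N : ℕ) (T : ℝ)
    (P : EuclideanSpace ℝ (Fin N) → ℝ) (hP : ContDiff ℝ 1 P)
    -- the individual partitions `0 = t_{i,0} < ⋯ < t_{i,M_i} = T`
    (M : Fin N → ℕ)
    (t : Fin N → ℕ → ℝ)
    (ht0 : ∀ i, t i 0 = 0) (htT : ∀ i, t i (M i) = T)
    (htmono : ∀ i, ∀ j < M i, t i j < t i (j + 1))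
    -- the polynomial degrees `q_{ij} ≥ 1`
    (q : Fin N → ℕ → ℕ)
    -- `U` (positions) and `V` (velocities) are continuous piecewise polynomials
    (U V : ℝ → EuclideanSpace ℝ (Fin N))
    (hUc : ContinuousOn U (Set.Icc 0 T))
    (hUpoly : ∀ i, ∀ j < M i, ∃ p : Polynomial ℝ, p.natDegree ≤ q i j ∧
      ∀ s ∈ Set.Icc (t i j) (t i (j + 1)), U s i = p.eval s)
    (hVpoly : ∀ i, ∀ j < M i, ∃ p : Polynomial ℝ, p.natDegree ≤ q i j ∧
      ∀ s ∈ Set.Icc (t i j) (t i (j + 1)), V s i = p.eval s)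
    -- the Galerkin equations for `U̇ = V` and `V̇ = −∇P(U)`
    (hGalU : ∀ i, ∀ j < M i, ∀ w : Polynomial ℝ, w.natDegree ≤ q i j - 1 →
      ∫ s in (t i j)..(t i (j + 1)),
        (deriv (fun r => U r i) s - V s i) * w.eval s = 0)
    (hGalV : ∀ i, ∀ j < M i, ∀ w : Polynomial ℝ, w.natDegree ≤ q i j - 1 →
      ∫ s in (t i j)..(t i (j + 1)),
        (deriv (fun r => V r i) s
          + fderiv ℝ P (U s) (EuclideanSpace.single i 1)) * w.eval s = 0)
    -- a synchronized time-level `t̄ ∈ (0,T]`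
    (tbar : ℝ) (htbar : tbar ∈ Set.Ioc 0 T)
    (hsync : ∀ i, ∃ j, 1 ≤ j ∧ j ≤ M i ∧ tbar = t i j) :
    (1 / 2) * ‖V tbar‖ ^ 2 + P (U tbar) = (1 / 2) * ‖V 0‖ ^ 2 + P (U 0) := by
  obtain ⟨htbar0, htbarT⟩ := htbar
  set F : Fin N → ℝ → ℝ := fun i s =>
    fderiv ℝ P (U s) (EuclideanSpace.single i 1) * deriv (fun r => U r i) s
  have hcomponent : ∀ i, IntervalIntegrable (F i) volume 0 tbar ∧
      1 / 2 * V tbar i ^ 2 - 1 / 2 * V 0 i ^ 2 + ∫ s in 0..tbar, F i s = 0 := by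
    intro i
    obtain ⟨j, -, hjM, rfl⟩ := hsync i
    have hg : ContinuousOn (fun s => fderiv ℝ P (U s) (EuclideanSpace.single i 1))
        (Icc (t i 0) (t i (M i))) := by
      rw [ht0, htT]
      exact ((hP.continuous_fderiv one_ne_zero).clm_apply continuous_const).comp_continuousOn hUc
    simpa only [ht0 i] using galerkin_energy_partition (fun j hj => (htmono i j hj).le) hg
      (hUpoly i) (hVpoly i) (hGalU i) (hGalV i) hjM
  have hFTC : ∑ i, ∫ s in 0..tbar, F i s = P (U tbar) - P (U 0) := by
    rw [← intervalIntegral.integral_finsetSum fun i _ => (hcomponent i).1]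
    refine integral_eq_of_hasDerivAt_off_countable_of_le (fun s => P (U s)) _ htbar0.le
      (countable_iUnion fun i => countable_range (t i))
      (hP.continuous.comp_continuousOn (hUc.mono (Icc_subset_Icc_right htbarT)))
      (fun x ⟨hx, hxt⟩ => hasDerivAt_comp_of_notMem_nodes (hP.differentiable one_ne_zero _)
        (fun i j hj => (hUpoly i j hj).imp fun _ => And.right) (fun i => ht0 i ▸ hx.1)
        (fun i => htT i ▸ hx.2.trans_le htbarT) hxt)
      (by simpa only [Finset.sum_fn] using IntervalIntegrable.sum _ fun i _ => (hcomponent i).1)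
  have hsum := Finset.sum_eq_zero fun i (_ : i ∈ Finset.univ) => (hcomponent i).2
  rw [Finset.sum_add_distrib, Finset.sum_sub_distrib, ← Finset.mul_sum, ← Finset.mul_sum] at hsum
  rw [EuclideanSpace.real_norm_sq_eq, EuclideanSpace.real_norm_sq_eq]
  linarith

/-- Energy conservation for the multi-adaptive continuous Galerkin method (mcG(q)):
for a Hamiltonian system `u̇ = v`, `v̇ = −∇P(u)`, if the mcG(q) solution `(U, V)` uses the
same time-steps (and degrees) for every pair of positions and corresponding velocities, then
at every synchronized time-level `t̄` the total energy
`(1/2)‖V(t̄)‖² + P(U(t̄))` equals its initial value. -/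
theorem mcG_energy_conservation
    (N : ℕ) (hN : 1 ≤ N) (T : ℝ) (hT : 0 < T)
    (P : EuclideanSpace ℝ (Fin N) → ℝ) (hP : ContDiff ℝ 1 P)
    -- the individual partitions `0 = t_{i,0} < ⋯ < t_{i,M_i} = T`
    (M : Fin N → ℕ) (hM : ∀ i, 1 ≤ M i)
    (t : Fin N → ℕ → ℝ)
    (ht0 : ∀ i, t i 0 = 0) (htT : ∀ i, t i (M i) = T)
    (htmono : ∀ i, ∀ j < M i, t i j < t i (j + 1))
    -- the polynomial degrees `q_{ij} ≥ 1`
    (q : Fin N → ℕ → ℕ) (hq : ∀ i, ∀ j < M i, 1 ≤ q i j)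
    -- `U` (positions) and `V` (velocities) are continuous piecewise polynomials
    (U V : ℝ → EuclideanSpace ℝ (Fin N))
    (hUc : ContinuousOn U (Set.Icc 0 T)) (hVc : ContinuousOn V (Set.Icc 0 T))
    (hUpoly : ∀ i, ∀ j < M i, ∃ p : Polynomial ℝ, p.natDegree ≤ q i j ∧
      ∀ s ∈ Set.Icc (t i j) (t i (j + 1)), U s i = p.eval s)
    (hVpoly : ∀ i, ∀ j < M i, ∃ p : Polynomial ℝ, p.natDegree ≤ q i j ∧
      ∀ s ∈ Set.Icc (t i j) (t i (j + 1)), V s i = p.eval s)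
    -- the Galerkin equations for `U̇ = V` and `V̇ = −∇P(U)`
    (hGalU : ∀ i, ∀ j < M i, ∀ w : Polynomial ℝ, w.natDegree ≤ q i j - 1 →
      ∫ s in (t i j)..(t i (j + 1)),
        (deriv (fun r => U r i) s - V s i) * w.eval s = 0)
    (hGalV : ∀ i, ∀ j < M i, ∀ w : Polynomial ℝ, w.natDegree ≤ q i j - 1 →
      ∫ s in (t i j)..(t i (j + 1)),
        (deriv (fun r => V r i) s
          + fderiv ℝ P (U s) (EuclideanSpace.single i 1)) * w.eval s = 0)
    -- a synchronized time-level `t̄ ∈ (0,T]`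
    (tbar : ℝ) (htbar : tbar ∈ Set.Ioc 0 T)
    (hsync : ∀ i, ∃ j, 1 ≤ j ∧ j ≤ M i ∧ tbar = t i j) :
    (1 / 2) * ‖V tbar‖ ^ 2 + P (U tbar) = (1 / 2) * ‖V 0‖ ^ 2 + P (U 0) :=
  mcG_energy_conservation_general N T P hP M t ht0 htT htmono q U V hUc hUpoly hVpoly hGalU hGalV
    tbar htbar hsync
end

section
/- B-stability (monotonicity) of the multi-adaptive discontinuous Galerkin method: Let N ≥ 1, T > 0 and let f : ℝ^N × [0,T] → ℝ^N be continuous and monotone, i.e. (f(u,t) − f(v,t), u − v) ≤ 0 for all u, v ∈ ℝ^N and t ∈ [0,T]. Let U and V be mdG(q) solutions of u̇ = f(u,·) on the same partitions {t_{ij}} with the same degrees q_{ij}, with initial data U(0⁻), V(0⁻) ∈ ℝ^N. Then at every synchronized time-level t̄ ∈ (0,T] (i.e. every t̄ such that for each i there is some j with t̄ = t_{ij}) one has ‖U(t̄⁻) − V(t̄⁻)‖ ≤ ‖U(0⁻) − V(0⁻)‖, where t̄⁻ denotes the left limit and ‖·‖ is the Euclidean norm on ℝ^N. -/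
/-!
Fix a component `i` and an interval `I_{ij}`, and test the dG(q) equations of `U` and of `V`
with the difference `W = U_i - V_i` of their local polynomials, which is an admissible test
function. Since `∫ W' W = (W(t_{ij}⁻)² - W(t_{i,j-1}⁺)²) / 2` and
`(W⁺ - W⁻) W⁺ ≥ (W⁺² - W⁻²) / 2`, subtracting the two equations gives
`W(t_{ij}⁻)² ≤ W(t_{i,j-1}⁻)² + 2 ∫_{I_{ij}} (f_i(U) - f_i(V)) (U_i - V_i)`.
Telescoping over `j` up to a synchronized level `t̄` and summing over `i`, the right-hand side
becomes `‖U(0⁻) - V(0⁻)‖² + 2 ∫_0^t̄ ⟪f(U) - f(V), U - V⟫`, and the integral is `≤ 0` by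
monotonicity. The integrals are genuine (not junk zeros) because the piecewise polynomials `U`,
`V` are a.e. strongly measurable and bounded on `(0, T]`, so `f(U, ·)` and `f(V, ·)` are integrable.
-/

open MeasureTheory intervalIntegral Set Polynomial
open scoped RealInnerProductSpace

section Partition

variable {M : ℕ} {t : ℕ → ℝ}

lemma exists_lt_mem_Ioc_of_mem_Ioc {s : ℝ} (hs : s ∈ Ioc (t 0) (t M)) :
    ∃ j < M, s ∈ Ioc (t j) (t (j + 1)) := by
  induction M with
  | zero => exact absurd hs (by simp)
  | succ M ih =>
    by_cases h : s ≤ t M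
    · obtain ⟨j, hj, hjs⟩ := ih ⟨hs.1, h⟩
      exact ⟨j, by omega, hjs⟩
    · exact ⟨M, M.lt_succ_self, not_le.1 h, hs.2⟩

lemma Ioc_subset_Ioc_of_lt_succ (ht : ∀ j < M, t j < t (j + 1)) {j : ℕ} (hj : j < M) :
    Ioc (t j) (t (j + 1)) ⊆ Ioc (t 0) (t M) := by
  have hmono := (strictMonoOn_Iic_of_lt_succ ht).monotoneOn
  exact Ioc_subset_Ioc (hmono (by simp) (by simp; omega) j.zero_le)
    (hmono (by simp; omega) (by simp) hj)

variable {p : ℕ → ℝ[X]} {u : ℝ → ℝ}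

lemma aestronglyMeasurable_of_eq_eval_on_Ioc
    (hu : ∀ j < M, ∀ s ∈ Ioc (t j) (t (j + 1)), u s = (p j).eval s) :
    AEStronglyMeasurable u (volume.restrict (Ioc (t 0) (t M))) := by
  have hcover : Ioc (t 0) (t M) ⊆ ⋃ j : Fin M, Ioc (t j) (t (j + 1)) := fun s hs => by
    obtain ⟨j, hj, hjs⟩ := exists_lt_mem_Ioc_of_mem_Ioc hs
    exact mem_iUnion.2 ⟨⟨j, hj⟩, hjs⟩
  refine (aestronglyMeasurable_iUnion_iff.2 fun j => ?_).mono_set hcover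
  exact (p j).continuous.aestronglyMeasurable.congr
    ((ae_restrict_iff' measurableSet_Ioc).2 (ae_of_all _ fun s hs => (hu j j.2 s hs).symm))

lemma exists_bound_of_eq_eval_on_Ioc
    (hu : ∀ j < M, ∀ s ∈ Ioc (t j) (t (j + 1)), u s = (p j).eval s) :
    ∃ C, ∀ s ∈ Ioc (t 0) (t M), ‖u s‖ ≤ C := by
  have hK : IsCompact (⋃ j ∈ Finset.range M, (fun s => (p j).eval s) '' Icc (t j) (t (j + 1))) :=
    (Finset.range M).isCompact_biUnion fun j _ => isCompact_Icc.image (p j).continuous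
  obtain ⟨C, hC⟩ := hK.isBounded.exists_norm_le
  refine ⟨C, fun s hs => hC _ ?_⟩
  obtain ⟨j, hj, hjs⟩ := exists_lt_mem_Ioc_of_mem_Ioc hs
  exact mem_biUnion (Finset.mem_range.2 hj) ⟨s, Ioc_subset_Icc_self hjs, (hu j hj s hjs).symm⟩

end Partition

section EuclideanSpace

variable {ι α : Type*} [Fintype ι] {U : α → EuclideanSpace ℝ ι}

lemma EuclideanSpace.aestronglyMeasurable_of_apply [MeasurableSpace α] {μ : Measure α}
    (h : ∀ i, AEStronglyMeasurable (fun x => U x i) μ) : AEStronglyMeasurable U μ :=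
  ((WithLp.measurable_toLp 2 _).comp_aemeasurable
    (aemeasurable_pi_lambda _ fun i => (h i).aemeasurable)).aestronglyMeasurable

lemma EuclideanSpace.exists_bound_of_apply {s : Set α} (h : ∀ i, ∃ C, ∀ x ∈ s, ‖U x i‖ ≤ C) :
    ∃ C, ∀ x ∈ s, ‖U x‖ ≤ C := by
  choose C hC using h
  refine ⟨√(∑ i, C i ^ 2), fun x hx => ?_⟩
  rw [EuclideanSpace.norm_eq]
  exact Real.sqrt_le_sqrt
    (Finset.sum_le_sum fun i _ => pow_le_pow_left₀ (norm_nonneg _) (hC i x hx) 2)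

lemma EuclideanSpace.norm_le_of_sq_apply_le {x y : EuclideanSpace ℝ ι} {c : ι → ℝ}
    (h : ∀ i, x i ^ 2 ≤ y i ^ 2 + c i) (hc : ∑ i, c i ≤ 0) : ‖x‖ ≤ ‖y‖ := by
  refine (pow_le_pow_iff_left₀ (norm_nonneg _) (norm_nonneg _) two_ne_zero).1 ?_
  rw [EuclideanSpace.real_norm_sq_eq, EuclideanSpace.real_norm_sq_eq]
  calc ∑ i, x i ^ 2 ≤ ∑ i, (y i ^ 2 + c i) := Finset.sum_le_sum fun i _ => h i
    _ ≤ ∑ i, y i ^ 2 := by rw [Finset.sum_add_distrib]; linarith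

end EuclideanSpace

lemma Continuous.integrableOn_comp_of_bounded {E F : Type*} [NormedAddCommGroup E]
    [ProperSpace E] [NormedAddCommGroup F] {g : E → ℝ → F}
    (hg : Continuous fun p : E × ℝ => g p.1 p.2) {U : ℝ → E} {a b : ℝ}
    (hU : AEStronglyMeasurable U (volume.restrict (Ioc a b)))
    (hUb : ∃ C, ∀ s ∈ Ioc a b, ‖U s‖ ≤ C) :
    IntegrableOn (fun s => g (U s) s) (Ioc a b) := by
  obtain ⟨C, hC⟩ := hUb
  obtain ⟨K, hK⟩ := ((isCompact_closedBall (0 : E) C).prod (isCompact_Icc (a := a) (b := b))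
    ).exists_bound_of_continuousOn hg.continuousOn
  refine Integrable.of_bound (hg.comp_aestronglyMeasurable (hU.prodMk aestronglyMeasurable_id)) K ?_
  filter_upwards [ae_restrict_mem measurableSet_Ioc] with s hs
  exact hK (U s, s) ⟨mem_closedBall_zero_iff.2 (hC s hs), Ioc_subset_Icc_self hs⟩

lemma EuclideanSpace.integrableOn_apply_comp_of_eq_eval_on_Ioc {ι : Type*} [Fintype ι]
    {g : EuclideanSpace ℝ ι → ℝ → EuclideanSpace ℝ ι}
    (hg : Continuous fun p : EuclideanSpace ℝ ι × ℝ => g p.1 p.2) {M : ι → ℕ} {t : ι → ℕ → ℝ}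
    {p : ι → ℕ → ℝ[X]} {U : ℝ → EuclideanSpace ℝ ι} {a b : ℝ} (ha : ∀ i, t i 0 = a)
    (hb : ∀ i, t i (M i) = b)
    (hU : ∀ i, ∀ j < M i, ∀ s ∈ Ioc (t i j) (t i (j + 1)), U s i = (p i j).eval s) (i : ι) :
    IntegrableOn (fun s => g (U s) s i) (Ioc a b) := by
  have hmeas : AEStronglyMeasurable U (volume.restrict (Ioc a b)) :=
    EuclideanSpace.aestronglyMeasurable_of_apply fun i => by
      simpa only [ha, hb] using aestronglyMeasurable_of_eq_eval_on_Ioc (hU i)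
  have hbdd : ∃ C, ∀ s ∈ Ioc a b, ‖U s‖ ≤ C :=
    EuclideanSpace.exists_bound_of_apply fun i => by
      simpa only [ha, hb] using exists_bound_of_eq_eval_on_Ioc (hU i)
  exact integrable_piLp_iff.1 (hg.integrableOn_comp_of_bounded hmeas hbdd) i

lemma MeasureTheory.IntegrableOn.intervalIntegrable_mul_eval {F : ℝ → ℝ} {a b : ℝ}
    (hab : a ≤ b) (hF : IntegrableOn F (Ioc a b)) (P : ℝ[X]) :
    IntervalIntegrable (fun s => F s * P.eval s) volume a b :=
  (intervalIntegrable_iff_integrableOn_Ioc_of_le hab).2 <|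
    hF.mul_continuousOn_of_subset P.continuous.continuousOn measurableSet_Ioc isCompact_Icc
      Ioc_subset_Icc_self

lemma Polynomial.integral_derivative_eval_mul_eval (W : ℝ[X]) (a b : ℝ) :
    ∫ s in a..b, W.derivative.eval s * W.eval s = (W.eval b ^ 2 - W.eval a ^ 2) / 2 := by
  have hderiv : ∀ s ∈ uIcc a b,
      HasDerivAt (fun y => W.eval y ^ 2 / 2) (W.derivative.eval s * W.eval s) s := fun s _ =>
    (((W.hasDerivAt s).pow 2).div_const 2).congr_deriv (by ring)
  rw [integral_eq_sub_of_hasDerivAt hderiv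
    ((W.derivative.continuous.mul W.continuous).intervalIntegrable _ _)]
  ring

lemma sq_eval_sub_le_of_galerkin {P Q : ℝ[X]} {a b x y : ℝ} {F G : ℝ → ℝ} (hab : a ≤ b)
    (hF : IntegrableOn F (Ioc a b)) (hG : IntegrableOn G (Ioc a b))
    (hP : (P.eval a - x) * (P - Q).eval a
      + ∫ s in a..b, (P.derivative.eval s - F s) * (P - Q).eval s = 0)
    (hQ : (Q.eval a - y) * (P - Q).eval a
      + ∫ s in a..b, (Q.derivative.eval s - G s) * (P - Q).eval s = 0) :
    (P - Q).eval b ^ 2 ≤ (x - y) ^ 2 + 2 * ∫ s in a..b, (F s - G s) * (P - Q).eval s := by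
  set W := P - Q
  have hcont (R : ℝ[X]) :
      IntervalIntegrable (fun s => R.derivative.eval s * W.eval s) volume a b :=
    (R.derivative.continuous.mul W.continuous).intervalIntegrable _ _
  simp only [sub_mul] at hP hQ ⊢
  rw [integral_sub (hcont P) (hF.intervalIntegrable_mul_eval hab W)] at hP
  rw [integral_sub (hcont Q) (hG.intervalIntegrable_mul_eval hab W)] at hQ
  rw [integral_sub (hF.intervalIntegrable_mul_eval hab W) (hG.intervalIntegrable_mul_eval hab W)]
  have hW : ((∫ s in a..b, P.derivative.eval s * W.eval s)
      - ∫ s in a..b, Q.derivative.eval s * W.eval s) = (W.eval b ^ 2 - W.eval a ^ 2) / 2 := by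
    rw [← integral_sub (hcont P) (hcont Q), ← W.integral_derivative_eval_mul_eval]
    simp only [W, derivative_sub, eval_sub, sub_mul]
  simp only [W, eval_sub] at hP hQ hW ⊢
  -- the slack in the inequality is the squared jump of `W` at `a`, dissipated by the scheme
  nlinarith [sq_nonneg (P.eval a - Q.eval a - (x - y))]

section DGSolution

/-- The left limit `u(t_j⁻)` of the piecewise polynomial with pieces `p j` on `(t j, t (j + 1)]`;
at `j = 0` it is the initial datum `u(0⁻) = u₀`. -/
def dgLeftValue (t : ℕ → ℝ) (p : ℕ → ℝ[X]) (u₀ : ℝ) (j : ℕ) : ℝ :=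
  if j = 0 then u₀ else (p (j - 1)).eval (t j)

/-- The forcing `F` stands for `s ↦ f_i(U(s), s)`, evaluated along the full solution `U`, so that
a single component of an mdG(q) solution satisfies scalar dG(q) equations. -/
def IsDGSolution (M : ℕ) (t : ℕ → ℝ) (q : ℕ → ℕ) (p : ℕ → ℝ[X]) (u₀ : ℝ) (F : ℝ → ℝ) : Prop :=
  (∀ j < M, (p j).natDegree ≤ q j) ∧
    ∀ j < M, ∀ v : ℝ[X], v.natDegree ≤ q j →
      ((p j).eval (t j) - dgLeftValue t p u₀ j) * v.eval (t j)
        + ∫ s in t j..t (j + 1), ((p j).derivative.eval s - F s) * v.eval s = 0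

variable {M : ℕ} {t : ℕ → ℝ} {q : ℕ → ℕ} {p r : ℕ → ℝ[X]} {u₀ v₀ : ℝ} {F G u v : ℝ → ℝ}

lemma IsDGSolution.sq_dgLeftValue_succ_le (hp : IsDGSolution M t q p u₀ F)
    (hr : IsDGSolution M t q r v₀ G) (ht : ∀ j < M, t j < t (j + 1))
    (hF : IntegrableOn F (Ioc (t 0) (t M))) (hG : IntegrableOn G (Ioc (t 0) (t M)))
    {j : ℕ} (hj : j < M) :
    (dgLeftValue t p u₀ (j + 1) - dgLeftValue t r v₀ (j + 1)) ^ 2 ≤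
      (dgLeftValue t p u₀ j - dgLeftValue t r v₀ j) ^ 2
        + 2 * ∫ s in t j..t (j + 1), (F s - G s) * (p j - r j).eval s := by
  have hdeg : (p j - r j).natDegree ≤ q j :=
    (natDegree_sub_le _ _).trans (max_le (hp.1 j hj) (hr.1 j hj))
  have hsub := Ioc_subset_Ioc_of_lt_succ ht hj
  simpa [dgLeftValue] using sq_eval_sub_le_of_galerkin (ht j hj).le (hF.mono_set hsub)
    (hG.mono_set hsub) (hp.2 j hj _ hdeg) (hr.2 j hj _ hdeg)

theorem IsDGSolution.sq_sub_le (hp : IsDGSolution M t q p u₀ F) (hr : IsDGSolution M t q r v₀ G)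
    (ht : ∀ j < M, t j < t (j + 1))
    (hu : ∀ j < M, ∀ s ∈ Ioc (t j) (t (j + 1)), u s = (p j).eval s)
    (hv : ∀ j < M, ∀ s ∈ Ioc (t j) (t (j + 1)), v s = (r j).eval s)
    (hF : IntegrableOn F (Ioc (t 0) (t M))) (hG : IntegrableOn G (Ioc (t 0) (t M)))
    {n : ℕ} (hn : 0 < n) (hnM : n ≤ M) :
    IntervalIntegrable (fun s => (F s - G s) * (u s - v s)) volume (t 0) (t n) ∧
      (u (t n) - v (t n)) ^ 2 ≤ (u₀ - v₀) ^ 2 + 2 * ∫ s in t 0..t n, (F s - G s) * (u s - v s) := by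
  set E := fun j => dgLeftValue t p u₀ j - dgLeftValue t r v₀ j
  have hpiece : ∀ j < n, EqOn (fun s => (F s - G s) * (u s - v s))
      (fun s => (F s - G s) * (p j - r j).eval s) (uIoc (t j) (t (j + 1))) := by
    intro j hj s hs
    rw [uIoc_of_le (ht j (by omega)).le] at hs
    simp [hu j (by omega) s hs, hv j (by omega) s hs]
  have hint : ∀ j < n, IntervalIntegrable (fun s => (F s - G s) * (u s - v s)) volume
      (t j) (t (j + 1)) := fun j hj => by
    have hsub := Ioc_subset_Ioc_of_lt_succ ht (hj.trans_le hnM)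
    exact (intervalIntegrable_congr (hpiece j hj)).2 <|
      ((hF.sub hG).mono_set hsub).intervalIntegrable_mul_eval (ht j (by omega)).le _
  have hstep : ∀ j < n, E (j + 1) ^ 2 - E j ^ 2 ≤
      2 * ∫ s in t j..t (j + 1), (F s - G s) * (u s - v s) := fun j hj => by
    rw [integral_congr_ae (ae_of_all _ (hpiece j hj)), sub_le_iff_le_add']
    exact hp.sq_dgLeftValue_succ_le hr ht hF hG (by omega)
  have hEn : E n = u (t n) - v (t n) := by
    obtain ⟨k, rfl⟩ := Nat.exists_eq_add_one_of_ne_zero hn.ne'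
    have hk : t (k + 1) ∈ Ioc (t k) (t (k + 1)) := ⟨ht k (by omega), le_rfl⟩
    simp [E, dgLeftValue, hu k (by omega) _ hk, hv k (by omega) _ hk]
  refine ⟨IntervalIntegrable.trans_iterate hint, ?_⟩
  have htele := Finset.sum_le_sum fun j hj => hstep j (Finset.mem_range.1 hj)
  rw [Finset.sum_range_sub (fun j => E j ^ 2), ← Finset.mul_sum,
    sum_integral_adjacent_intervals hint, hEn] at htele
  simp only [E, dgLeftValue, if_pos] at htele
  linarith

end DGSolution

theorem mdG_B_stability_general
    (N : ℕ) (T : ℝ)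
    (f : EuclideanSpace ℝ (Fin N) → ℝ → EuclideanSpace ℝ (Fin N))
    (hfc : Continuous fun p : EuclideanSpace ℝ (Fin N) × ℝ => f p.1 p.2)
    (hmono : ∀ (x y : EuclideanSpace ℝ (Fin N)), ∀ s ∈ Set.Icc (0:ℝ) T,
      ⟪f x s - f y s, x - y⟫ ≤ (0 : ℝ))
    -- common partitions and degrees
    (M : Fin N → ℕ)
    (t : Fin N → ℕ → ℝ)
    (ht0 : ∀ i, t i 0 = 0) (htT : ∀ i, t i (M i) = T)
    (htmono : ∀ i, ∀ j < M i, t i j < t i (j + 1))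
    (q : Fin N → ℕ → ℕ)
    -- the two mdG(q) solutions with initial data `Ua = U(0⁻)`, `Va = V(0⁻)`
    (U V : ℝ → EuclideanSpace ℝ (Fin N))
    (Ua Va : EuclideanSpace ℝ (Fin N))
    (pU pV : Fin N → ℕ → Polynomial ℝ)
    (hpUdeg : ∀ i, ∀ j < M i, (pU i j).natDegree ≤ q i j)
    (hpVdeg : ∀ i, ∀ j < M i, (pV i j).natDegree ≤ q i j)
    (hUval : ∀ i, ∀ j < M i, ∀ s ∈ Set.Ioc (t i j) (t i (j + 1)), U s i = (pU i j).eval s)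
    (hVval : ∀ i, ∀ j < M i, ∀ s ∈ Set.Ioc (t i j) (t i (j + 1)), V s i = (pV i j).eval s)
    -- the local mdG(q) variational equations
    (hGalU : ∀ i, ∀ j < M i, ∀ v : Polynomial ℝ, v.natDegree ≤ q i j →
      ((pU i j).eval (t i j)
          - (if j = 0 then Ua i else (pU i (j - 1)).eval (t i j))) * v.eval (t i j)
        + (∫ s in (t i j)..(t i (j + 1)),
            ((pU i j).derivative.eval s - f (U s) s i) * v.eval s) = 0)
    (hGalV : ∀ i, ∀ j < M i, ∀ v : Polynomial ℝ, v.natDegree ≤ q i j →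
      ((pV i j).eval (t i j)
          - (if j = 0 then Va i else (pV i (j - 1)).eval (t i j))) * v.eval (t i j)
        + (∫ s in (t i j)..(t i (j + 1)),
            ((pV i j).derivative.eval s - f (V s) s i) * v.eval s) = 0)
    -- a synchronized time-level `t̄ ∈ (0,T]`
    (tbar : ℝ) (htbar : tbar ∈ Set.Ioc 0 T)
    (hsync : ∀ i, ∃ j, 1 ≤ j ∧ j ≤ M i ∧ tbar = t i j) :
    ‖U tbar - V tbar‖ ≤ ‖Ua - Va‖ := by
  choose J hJ1 hJM hJt using hsync
  have hFU := EuclideanSpace.integrableOn_apply_comp_of_eq_eval_on_Ioc hfc ht0 htT hUval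
  have hFV := EuclideanSpace.integrableOn_apply_comp_of_eq_eval_on_Ioc hfc ht0 htT hVval
  have hcomp (i : Fin N) := IsDGSolution.sq_sub_le (u := fun s => U s i) (v := fun s => V s i)
    ⟨hpUdeg i, hGalU i⟩ ⟨hpVdeg i, hGalV i⟩ (htmono i) (hUval i) (hVval i)
    (by rw [ht0, htT]; exact hFU i) (by rw [ht0, htT]; exact hFV i) (hJ1 i) (hJM i)
  simp only [ht0, ← hJt] at hcomp
  choose hint hle using hcomp
  refine EuclideanSpace.norm_le_of_sq_apply_le hle ?_
  rw [← Finset.mul_sum, ← integral_finsetSum fun i _ => hint i, integral_of_le htbar.1.le]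
  refine mul_nonpos_of_nonneg_of_nonpos zero_le_two
    (setIntegral_nonpos measurableSet_Ioc fun s hs => ?_)
  convert hmono (U s) (V s) s ⟨hs.1.le, hs.2.trans htbar.2⟩
  simp [PiLp.inner_apply, mul_comm]

/-- B-stability (monotonicity) of the multi-adaptive discontinuous Galerkin method mdG(q):
for a monotone right-hand side `f`, two mdG(q) solutions `U`, `V` of `u̇ = f(u,·)` on the same
partitions with the same degrees satisfy `‖U(t̄⁻) − V(t̄⁻)‖ ≤ ‖U(0⁻) − V(0⁻)‖` at every
synchronized time-level `t̄`.  Each component `U_i` is given on `I_{ij} = (t_{i,j-1}, t_{ij}]`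
by the polynomial `pU i j`, so that `U(t̄⁻) = U(t̄)` and left/right limits at the nodes are
polynomial evaluations. -/
theorem mdG_B_stability
    (N : ℕ) (hN : 1 ≤ N) (T : ℝ) (hT : 0 < T)
    (f : EuclideanSpace ℝ (Fin N) → ℝ → EuclideanSpace ℝ (Fin N))
    (hfc : Continuous fun p : EuclideanSpace ℝ (Fin N) × ℝ => f p.1 p.2)
    (hmono : ∀ (x y : EuclideanSpace ℝ (Fin N)), ∀ s ∈ Set.Icc (0:ℝ) T,
      ⟪f x s - f y s, x - y⟫ ≤ (0 : ℝ))
    -- common partitions and degrees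
    (M : Fin N → ℕ) (hM : ∀ i, 1 ≤ M i)
    (t : Fin N → ℕ → ℝ)
    (ht0 : ∀ i, t i 0 = 0) (htT : ∀ i, t i (M i) = T)
    (htmono : ∀ i, ∀ j < M i, t i j < t i (j + 1))
    (q : Fin N → ℕ → ℕ)
    -- the two mdG(q) solutions with initial data `Ua = U(0⁻)`, `Va = V(0⁻)`
    (U V : ℝ → EuclideanSpace ℝ (Fin N))
    (Ua Va : EuclideanSpace ℝ (Fin N))
    (pU pV : Fin N → ℕ → Polynomial ℝ)
    (hpUdeg : ∀ i, ∀ j < M i, (pU i j).natDegree ≤ q i j)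
    (hpVdeg : ∀ i, ∀ j < M i, (pV i j).natDegree ≤ q i j)
    (hUval : ∀ i, ∀ j < M i, ∀ s ∈ Set.Ioc (t i j) (t i (j + 1)), U s i = (pU i j).eval s)
    (hVval : ∀ i, ∀ j < M i, ∀ s ∈ Set.Ioc (t i j) (t i (j + 1)), V s i = (pV i j).eval s)
    -- the local mdG(q) variational equations
    (hGalU : ∀ i, ∀ j < M i, ∀ v : Polynomial ℝ, v.natDegree ≤ q i j →
      ((pU i j).eval (t i j)
          - (if j = 0 then Ua i else (pU i (j - 1)).eval (t i j))) * v.eval (t i j)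
        + (∫ s in (t i j)..(t i (j + 1)),
            ((pU i j).derivative.eval s - f (U s) s i) * v.eval s) = 0)
    (hGalV : ∀ i, ∀ j < M i, ∀ v : Polynomial ℝ, v.natDegree ≤ q i j →
      ((pV i j).eval (t i j)
          - (if j = 0 then Va i else (pV i (j - 1)).eval (t i j))) * v.eval (t i j)
        + (∫ s in (t i j)..(t i (j + 1)),
            ((pV i j).derivative.eval s - f (V s) s i) * v.eval s) = 0)
    -- a synchronized time-level `t̄ ∈ (0,T]`
    (tbar : ℝ) (htbar : tbar ∈ Set.Ioc 0 T)
    (hsync : ∀ i, ∃ j, 1 ≤ j ∧ j ≤ M i ∧ tbar = t i j) :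
    ‖U tbar - V tbar‖ ≤ ‖Ua - Va‖ :=
  mdG_B_stability_general N T f hfc hmono M t ht0 htT htmono q U V Ua Va pU pV hpUdeg hpVdeg hUval
    hVval hGalU hGalV tbar htbar hsync
end

section
/- Interpolation estimate: Let a < b, k = b − a, q ∈ ℕ, and let f : [a,b] → ℝ be (q+1)-times continuously differentiable. Let π^{[q]} f be the q-th order Taylor polynomial of f around the midpoint x₀ = (a+b)/2. Then for every x ∈ [a,b]: |f(x) − π^{[q]} f(x)| ≤ C_q · k^{q+1} · (1/k) ∫_a^b |f^{(q+1)}(y)| dy, where C_q = 1/(2^q q!). -/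
/-!
Taylor's formula with integral remainder, expanded at the midpoint `x₀`, gives
`f x - π^{[q]} f x = ∫_{x₀}^{x} (x - t)^q / q! · f^{(q+1)}(t) dt`.
On the range of integration `|x - t| ≤ |x - x₀| ≤ k / 2`, so the remainder is at most
`(k/2)^q / q! · ∫_a^b |f^{(q+1)}| = C_q k^{q+1} · (1/k) ∫_a^b |f^{(q+1)}|`.
-/

open MeasureTheory intervalIntegral Set
open scoped Nat Interval

variable {E : Type*} [NormedAddCommGroup E] [NormedSpace ℝ E]

/-- Unlike in `taylor_integral_remainder`, the derivatives are taken within a fixed interval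
`[a, b]` rather than within `[[x₀, x]]`. -/
theorem taylor_integral_remainder_Icc [CompleteSpace E] {f : ℝ → E} {a b x₀ x : ℝ} {n : ℕ}
    (hab : a < b) (hf : ContDiffOn ℝ (n + 1) f (Icc a b)) (hx₀ : x₀ ∈ Icc a b)
    (hx : x ∈ Icc a b) :
    f x - taylorWithinEval f n (Icc a b) x₀ x =
      ∫ t in x₀..x, ((n ! : ℝ)⁻¹ * (x - t) ^ n) • iteratedDerivWithin (n + 1) f (Icc a b) t := by
  have hs : UniqueDiffOn ℝ (Icc a b) := uniqueDiffOn_Icc hab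
  have hsub : [[x₀, x]] ⊆ Icc a b := uIcc_subset_Icc hx₀ hx
  have hderiv : DifferentiableOn ℝ (iteratedDerivWithin n f (Icc a b)) (Ioo a b) :=
    (hf.differentiableOn_iteratedDerivWithin (by norm_cast; omega) hs).mono Ioo_subset_Icc_self
  have hcont : ContinuousOn
      (fun t ↦ ((n ! : ℝ)⁻¹ * (x - t) ^ n) • iteratedDerivWithin (n + 1) f (Icc a b) t)
      (Icc a b) :=
    (by fun_prop : Continuous fun t : ℝ ↦ (n ! : ℝ)⁻¹ * (x - t) ^ n).continuousOn.smul
      (hf.continuousOn_iteratedDerivWithin le_rfl hs)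
  rw [← taylorWithinEval_self f n (Icc a b) x]
  refine (integral_eq_sub_of_hasDeriv_right
    ((continuousOn_taylorWithinEval hs hf.of_succ).mono hsub) (fun t ht ↦ ?_)
    ((hcont.mono hsub).intervalIntegrable)).symm
  have ht' : t ∈ Ioo a b :=
    ⟨(le_min hx₀.1 hx.1).trans_lt ht.1, ht.2.trans_le (max_le hx₀.2 hx.2)⟩
  exact (taylorWithinEval_hasDerivAt_Ioo x hab ht' hf.of_succ hderiv).hasDerivWithinAt

theorem norm_integral_le_integral_norm_of_uIcc_subset {F : ℝ → E} {a b c d : ℝ}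
    (hcd : [[c, d]] ⊆ Icc a b) (hF : IntervalIntegrable F volume a b) :
    ‖∫ t in c..d, F t‖ ≤ ∫ t in a..b, ‖F t‖ := by
  have hab : a ≤ b := (hcd left_mem_uIcc).1.trans (hcd left_mem_uIcc).2
  have hsub : Ι c d ⊆ Ioc a b := by
    rw [← uIoc_of_le hab]
    exact uIoc_subset_uIoc_of_uIcc_subset_uIcc (by rwa [uIcc_of_le hab])
  calc ‖∫ t in c..d, F t‖ ≤ ∫ t in Ι c d, ‖F t‖ := norm_integral_le_integral_norm_uIoc
    _ ≤ ∫ t in Ioc a b, ‖F t‖ :=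
      setIntegral_mono_set ((intervalIntegrable_iff_integrableOn_Ioc_of_le hab).1 hF.norm)
        (ae_of_all _ fun _ ↦ norm_nonneg _) hsub.eventuallyLE
    _ = ∫ t in a..b, ‖F t‖ := (integral_of_le hab).symm

theorem norm_integral_le_mul_integral_norm_of_uIcc_subset {F G : ℝ → E} {a b c d C : ℝ}
    (hC : 0 ≤ C) (hcd : [[c, d]] ⊆ Icc a b) (hF : IntervalIntegrable F volume a b)
    (hG : ∀ t ∈ Ι c d, ‖G t‖ ≤ C * ‖F t‖) :
    ‖∫ t in c..d, G t‖ ≤ C * ∫ t in a..b, ‖F t‖ := by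
  have hab : a ≤ b := (hcd left_mem_uIcc).1.trans (hcd left_mem_uIcc).2
  have hFcd : IntervalIntegrable F volume c d :=
    hF.mono_set (by rwa [uIcc_of_le hab])
  calc ‖∫ t in c..d, G t‖ ≤ |∫ t in c..d, C * ‖F t‖| :=
        norm_integral_le_abs_of_norm_le ((ae_restrict_iff' measurableSet_uIoc).2 (ae_of_all _ hG))
          (hFcd.norm.const_mul C)
    _ = C * ‖∫ t in c..d, ‖F t‖‖ := by
        rw [intervalIntegral.integral_const_mul, abs_mul, abs_of_nonneg hC, Real.norm_eq_abs]
    _ ≤ C * ∫ t in a..b, ‖‖F t‖‖ := by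
        gcongr
        exact norm_integral_le_integral_norm_of_uIcc_subset hcd hF.norm
    _ = C * ∫ t in a..b, ‖F t‖ := by simp only [norm_norm]

/-- Interpolation estimate (Lemma `lem:taylor`): for `f ∈ C^{q+1}([a,b])`, the `q`-th order
Taylor expansion `π^{[q]} f` of `f` around the midpoint `x₀ = (a+b)/2` satisfies
`|f(x) − π^{[q]} f(x)| ≤ C_q k^{q+1} (1/k) ∫_a^b |f^{(q+1)}(y)| dy` for all `x ∈ [a,b]`,
where `k = b − a` and `C_q = 1/(2^q q!)`. -/
theorem taylor_midpoint_interpolation_estimate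
    (a b : ℝ) (hab : a < b) (q : ℕ) (f : ℝ → ℝ)
    (hf : ContDiffOn ℝ (q + 1) f (Set.Icc a b)) :
    ∀ x ∈ Set.Icc a b,
      |f x - taylorWithinEval f q (Set.Icc a b) ((a + b) / 2) x| ≤
        (1 / (2 ^ q * (Nat.factorial q) : ℝ)) * (b - a) ^ (q + 1) *
          ((1 / (b - a)) *
            ∫ y in a..b, |iteratedDerivWithin (q + 1) f (Set.Icc a b) y|) := by
  intro x hx
  set F := iteratedDerivWithin (q + 1) f (Icc a b)
  have hx₀ : (a + b) / 2 ∈ Icc a b := ⟨by linarith, by linarith⟩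
  have hF : IntervalIntegrable F volume a b :=
    (hf.continuousOn_iteratedDerivWithin le_rfl (uniqueDiffOn_Icc hab)).intervalIntegrable_of_Icc
      hab.le
  have hkernel : ∀ t ∈ Ι ((a + b) / 2) x,
      ‖((q ! : ℝ)⁻¹ * (x - t) ^ q) • F t‖ ≤ ((b - a) / 2) ^ q / q ! * ‖F t‖ := by
    intro t ht
    have hxt : |x - t| ≤ (b - a) / 2 := by
      refine (abs_sub_right_of_mem_uIcc (uIoc_subset_uIcc ht)).trans ?_
      rw [abs_le]
      constructor <;> linarith [hx.1, hx.2]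
    rw [norm_smul, norm_mul, norm_pow, Real.norm_eq_abs, Real.norm_eq_abs, abs_inv,
      Nat.abs_cast, div_eq_inv_mul]
    gcongr
  calc |f x - taylorWithinEval f q (Icc a b) ((a + b) / 2) x|
      = ‖∫ t in (a + b) / 2..x, ((q ! : ℝ)⁻¹ * (x - t) ^ q) • F t‖ := by
        rw [taylor_integral_remainder_Icc hab hf hx₀ hx, Real.norm_eq_abs]
    _ ≤ ((b - a) / 2) ^ q / q ! * ∫ y in a..b, ‖F y‖ :=
        norm_integral_le_mul_integral_norm_of_uIcc_subset (by have := hab.le; positivity)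
          (uIcc_subset_Icc hx₀ hx) hF hkernel
    _ = _ := by
        simp only [Real.norm_eq_abs]
        have hk : b - a ≠ 0 := (sub_pos.2 hab).ne'
        rw [div_pow, pow_succ]
        field_simp
end

section
/- The mcG residual is a Legendre polynomial for decoupled linear right-hand sides: Let a < b, q ≥ 1, α, β ∈ ℝ, and let U be a polynomial of degree ≤ q on [a,b] satisfying the Galerkin orthogonality ∫_a^b (U'(t) − (α U(t) + β)) v(t) dt = 0 for every polynomial v of degree ≤ q − 1. Then the residual R(t) = U'(t) − (α U(t) + β), which is a polynomial of degree ≤ q, is a scalar multiple of the rescaled q-th Legendre polynomial: R(t) = c · P_q(σ(t)) for some c ∈ ℝ, where σ(t) = (2t − a − b)/(b − a). -/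
open MeasureTheory intervalIntegral Polynomial

/-- The `q`-th Legendre polynomial, via Rodrigues' formula
`P_q(x) = (1/(2^q q!)) (d/dx)^q ((x² − 1)^q)`. -/
noncomputable def legendrePoly (q : ℕ) : Polynomial ℝ :=
  Polynomial.C (1 / (2 ^ q * (Nat.factorial q) : ℝ)) *
    (Polynomial.derivative^[q] ((Polynomial.X ^ 2 - 1) ^ q))

private lemma polyIntegrable' (p : Polynomial ℝ) (a b : ℝ) :
    IntervalIntegrable (fun t => p.eval t) volume a b :=
  (p.continuous).intervalIntegrable a b

private lemma poly_ftc' (p : Polynomial ℝ) (a b : ℝ) :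
    ∫ t in a..b, p.derivative.eval t = p.eval b - p.eval a :=
  integral_eq_sub_of_hasDerivAt (fun x _ => p.hasDerivAt x)
    (polyIntegrable' _ a b)

private lemma iter_deriv_orth' (a b : ℝ) (q : ℕ) :
    ∀ k, k ≤ q → ∀ v : Polynomial ℝ, (v ≠ 0 → v.natDegree < k) →
      ∫ t in a..b,
        (Polynomial.derivative^[k] (((X - C a) * (X - C b)) ^ q)).eval t * v.eval t = 0 := by
  set G : Polynomial ℝ := ((X - C a) * (X - C b)) ^ q with hG
  have hmul : G = (X - C a) ^ q * (X - C b) ^ q := mul_pow _ _ q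
  intro k
  induction k with
  | zero =>
    intro _ v hv
    rcases eq_or_ne v 0 with rfl | h
    · simp
    · exact absurd (hv h) (Nat.not_lt_zero _)
  | succ k ih =>
    intro hk v hv
    rcases eq_or_ne v 0 with rfl | h
    · simp
    have hvd : v.natDegree < k + 1 := hv h
    have hroot : ∀ x, x = a ∨ x = b → (Polynomial.derivative^[k] G).eval x = 0 := by
      intro x hx
      have hdvd : (X - C x) ^ q ∣ G := by
        rcases hx with rfl | rfl
        · exact hmul ▸ dvd_mul_right _ _
        · exact hmul ▸ dvd_mul_left _ _
      have h2 : (X - C x) ^ (q - k) ∣ Polynomial.derivative^[k] G :=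
        pow_sub_dvd_iterate_derivative_of_pow_dvd k hdvd
      have h3 : (X - C x) ∣ Polynomial.derivative^[k] G := by
        refine dvd_trans ?_ h2
        calc X - C x = (X - C x) ^ 1 := (pow_one _).symm
        _ ∣ (X - C x) ^ (q - k) := pow_dvd_pow _ (by omega)
      exact dvd_iff_isRoot.mp h3
    have key : ∀ t : ℝ,
        (Polynomial.derivative^[k+1] G).eval t * v.eval t
          = (Polynomial.derivative (Polynomial.derivative^[k] G * v)).eval t
            - (Polynomial.derivative^[k] G).eval t * (Polynomial.derivative v).eval t := by
      intro t
      rw [derivative_mul, Function.iterate_succ_apply']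
      simp [eval_add, eval_mul]
    have h1 : ∫ t in a..b,
        (Polynomial.derivative (Polynomial.derivative^[k] G * v)).eval t = 0 := by
      rw [poly_ftc']
      simp [eval_mul, hroot a (Or.inl rfl), hroot b (Or.inr rfl)]
    have h2 : ∫ t in a..b,
        (Polynomial.derivative^[k] G).eval t * (Polynomial.derivative v).eval t = 0 := by
      apply ih (by omega)
      intro hdv
      have hnd : v.natDegree ≠ 0 := by
        intro h0
        exact hdv (by rw [Polynomial.eq_C_of_natDegree_eq_zero h0, derivative_C])
      exact lt_of_lt_of_le (Polynomial.natDegree_derivative_lt hnd) (by omega)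
    calc (∫ t in a..b, (Polynomial.derivative^[k+1] G).eval t * v.eval t)
        = ∫ t in a..b,
            ((Polynomial.derivative (Polynomial.derivative^[k] G * v)).eval t
              - (Polynomial.derivative^[k] G).eval t * (Polynomial.derivative v).eval t) := by
          exact intervalIntegral.integral_congr fun t _ => key t
      _ = (∫ t in a..b, (Polynomial.derivative (Polynomial.derivative^[k] G * v)).eval t)
            - ∫ t in a..b,
              (Polynomial.derivative^[k] G).eval t * (Polynomial.derivative v).eval t := by
          rw [intervalIntegral.integral_sub (polyIntegrable' _ a b) ?_]
          exact (((Polynomial.derivative^[k] G).continuous.mul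
            (Polynomial.derivative v).continuous)).intervalIntegrable a b
      _ = 0 := by rw [h1, h2, sub_zero]

/-- The mcG residual is a Legendre polynomial for decoupled linear right-hand sides:
if `U` is a polynomial of degree `≤ q` on `[a,b]` whose residual
`R(t) = U'(t) − (α U(t) + β)` is orthogonal to all polynomials of degree `≤ q − 1`,
then `R` is a scalar multiple of the rescaled `q`-th Legendre polynomial. -/
theorem mcG_residual_is_legendre
    (a b : ℝ) (hab : a < b) (q : ℕ) (hq : 1 ≤ q) (α β : ℝ)
    (U : Polynomial ℝ) (hU : U.natDegree ≤ q)
    (hGal : ∀ v : Polynomial ℝ, v.natDegree ≤ q - 1 →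
      ∫ t in a..b, (U.derivative.eval t - (α * U.eval t + β)) * v.eval t = 0) :
    ∃ c : ℝ, ∀ t : ℝ,
      U.derivative.eval t - (α * U.eval t + β)
        = c * (legendrePoly q).eval ((2 * t - a - b) / (b - a)) := by
  have hs : b - a ≠ 0 := sub_ne_zero.mpr hab.ne'
  set s : ℝ := b - a with hsdef
  set σp : Polynomial ℝ := C (2/s) * X - C ((a+b)/s) with hσp
  set W : Polynomial ℝ := (X - C a) * (X - C b) with hW
  set G : Polynomial ℝ := W ^ q with hGdef
  -- composition identities
  have hsig : ((X : Polynomial ℝ) ^ 2 - 1).comp σp = C (4/s^2) * W := by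
    apply Polynomial.funext
    intro t
    simp only [hσp, hW, eval_comp, eval_sub, eval_mul, eval_pow, eval_C, eval_X, eval_one]
    field_simp
    ring
  have hitercomp : ∀ (p : Polynomial ℝ) (k : ℕ),
      Polynomial.derivative^[k] (p.comp σp)
        = C ((2/s)^k) * ((Polynomial.derivative^[k] p).comp σp) := by
    intro p k
    induction k generalizing p with
    | zero => simp
    | succ k ih =>
      rw [Function.iterate_succ_apply, derivative_comp]
      have hd : Polynomial.derivative σp = C (2/s) := by simp [hσp]
      rw [hd, iterate_derivative_C_mul, ih (Polynomial.derivative p),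
        ← Function.iterate_succ_apply, ← mul_assoc, ← C_mul, ← pow_succ']
  have h2s : (2/s : ℝ) ≠ 0 := div_ne_zero two_ne_zero hs
  -- the key identity for the composed Legendre polynomial
  set r : ℝ := 1 / (2 ^ q * (Nat.factorial q) : ℝ) with hr
  have hrne : r ≠ 0 := by
    rw [hr]
    positivity
  set c0 : ℝ := r * (2/s)^q with hc0
  have hc0ne : c0 ≠ 0 := mul_ne_zero hrne (pow_ne_zero _ h2s)
  have hPcomp : (((X : Polynomial ℝ) ^ 2 - 1) ^ q).comp σp = C ((4/s^2)^q) * G := by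
    rw [pow_comp, hsig, mul_pow, ← C_pow, hGdef]
  have hDqP : ((Polynomial.derivative^[q] (((X : Polynomial ℝ) ^ 2 - 1) ^ q)).comp σp)
      = C ((2/s)^q) * Polynomial.derivative^[q] G := by
    apply mul_left_cancel₀ (b := _) (C_ne_zero.mpr (pow_ne_zero q h2s))
    rw [← hitercomp, hPcomp, iterate_derivative_C_mul, ← mul_assoc, ← C_mul, ← mul_pow]
    congr 2
    field_simp
    ring
  have hLcomp : (legendrePoly q).comp σp = C c0 * Polynomial.derivative^[q] G := by
    rw [legendrePoly, mul_comp, C_comp, hDqP, ← mul_assoc, ← C_mul, hc0, hr]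
  -- degree and leading coefficient facts
  have hWmonic : W.Monic := (monic_X_sub_C a).mul (monic_X_sub_C b)
  have hWdeg : W.natDegree = 2 := by
    rw [hW, (monic_X_sub_C a).natDegree_mul (monic_X_sub_C b), natDegree_X_sub_C,
      natDegree_X_sub_C]
  have hGmonic : G.Monic := hWmonic.pow q
  have hGdeg : G.natDegree = 2 * q := by
    rw [hGdef, hWmonic.natDegree_pow, hWdeg]; ring
  have hDqGdeg : (Polynomial.derivative^[q] G).natDegree ≤ q := by
    refine le_trans (Polynomial.natDegree_iterate_derivative _ _) ?_
    rw [hGdeg]; omega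
  have hDqGcoeff : (Polynomial.derivative^[q] G).coeff q
      = ((2 * q).descFactorial q : ℝ) := by
    rw [Polynomial.coeff_iterate_derivative]
    have : G.coeff (q + q) = 1 := by
      have : q + q = G.natDegree := by rw [hGdeg]; ring
      rw [this]; exact hGmonic.coeff_natDegree
    rw [this]
    have : q + q = 2 * q := by ring
    rw [this]
    simp
  have hDqGcoeffne : (Polynomial.derivative^[q] G).coeff q ≠ 0 := by
    rw [hDqGcoeff]
    have : (2 * q).descFactorial q ≠ 0 := by
      simp only [ne_eq, Nat.descFactorial_eq_zero_iff_lt]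
      omega
    exact_mod_cast this
  -- residual polynomial
  set R : Polynomial ℝ := U.derivative - (C α * U + C β) with hRdef
  have hReval : ∀ t : ℝ, R.eval t = U.derivative.eval t - (α * U.eval t + β) := by
    intro t; simp [hRdef]
  have hRdeg : R.natDegree ≤ q := by
    refine le_trans (natDegree_sub_le _ _) (max_le ?_ ?_)
    · exact le_trans (Polynomial.natDegree_derivative_le _) (by omega)
    · refine le_trans (natDegree_add_le _ _) (max_le ?_ ?_)
      · exact le_trans (natDegree_C_mul_le _ _) hU
      · simp
  set Lp : Polynomial ℝ := (legendrePoly q).comp σp with hLp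
  have hLpcoeff : Lp.coeff q = c0 * (Polynomial.derivative^[q] G).coeff q := by
    rw [hLcomp, coeff_C_mul]
  have hLpcoeffne : Lp.coeff q ≠ 0 := by
    rw [hLpcoeff]; exact mul_ne_zero hc0ne hDqGcoeffne
  set c : ℝ := R.coeff q / Lp.coeff q with hc
  set S : Polynomial ℝ := R - C c * Lp with hS
  have hScoeff : S.coeff q = 0 := by
    rw [hS, coeff_sub, coeff_C_mul, hc, div_mul_cancel₀ _ hLpcoeffne, sub_self]
  have hLpdeg : Lp.natDegree ≤ q := by
    rw [hLcomp]
    exact le_trans (natDegree_C_mul_le _ _) hDqGdeg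
  have hSdeg : S.natDegree ≤ q := by
    refine le_trans (natDegree_sub_le _ _) (max_le hRdeg ?_)
    exact le_trans (natDegree_C_mul_le _ _) hLpdeg
  -- orthogonality of Lp
  have hLporth : ∀ v : Polynomial ℝ, (v ≠ 0 → v.natDegree < q) →
      ∫ t in a..b, Lp.eval t * v.eval t = 0 := by
    intro v hv
    have : ∀ t : ℝ, Lp.eval t * v.eval t
        = c0 * ((Polynomial.derivative^[q] G).eval t * v.eval t) := by
      intro t
      rw [hLcomp]
      simp [eval_mul]
      ring
    rw [intervalIntegral.integral_congr (fun t _ => this t),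
      intervalIntegral.integral_const_mul, iter_deriv_orth' a b q q le_rfl v hv, mul_zero]
  -- S vanishes
  have hSzero : S = 0 := by
    by_contra hSne
    have hSdeg' : S.natDegree < q := by
      rcases lt_or_eq_of_le hSdeg with h | h
      · exact h
      · exfalso
        have hlc : S.leadingCoeff = 0 := by
          rw [Polynomial.leadingCoeff, h]; exact hScoeff
        exact Polynomial.leadingCoeff_ne_zero.mpr hSne hlc
    -- integral of S^2 is zero
    have hRS : ∫ t in a..b, R.eval t * S.eval t = 0 := by
      have := hGal S (by omega)
      rw [← this]
      exact intervalIntegral.integral_congr fun t _ => by rw [hReval]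
    have hLS : ∫ t in a..b, Lp.eval t * S.eval t = 0 :=
      hLporth S (fun _ => hSdeg')
    have hSS : ∫ t in a..b, S.eval t * S.eval t = 0 := by
      have heq : ∀ t : ℝ, S.eval t * S.eval t
          = R.eval t * S.eval t - c * (Lp.eval t * S.eval t) := by
        intro t; rw [hS]; simp [eval_sub, eval_mul]; ring
      rw [intervalIntegral.integral_congr (fun t _ => heq t),
        intervalIntegral.integral_sub (by
          exact ((R.continuous.mul S.continuous)).intervalIntegrable a b) (by
          exact ((continuous_const.mul (Lp.continuous.mul S.continuous))).intervalIntegrable a b),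
        hRS, intervalIntegral.integral_const_mul, hLS, mul_zero, sub_zero]
    -- but it must be positive
    have hposint : 0 < ∫ t in a..b, S.eval t * S.eval t := by
      rw [intervalIntegral.integral_pos_iff_support_of_nonneg_ae]
      · refine ⟨hab, ?_⟩
        have hfin : Set.Finite {x : ℝ | S.IsRoot x} := Polynomial.finite_setOf_isRoot hSne
        have hsub : Set.Ioc a b \ {x : ℝ | S.IsRoot x}
            ⊆ Function.support (fun t => S.eval t * S.eval t) ∩ Set.Ioc a b := by
          rintro x ⟨hx1, hx2⟩
          refine ⟨?_, hx1⟩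
          simp only [Function.mem_support]
          intro h
          exact hx2 (by
            have := mul_self_eq_zero.mp h
            exact this)
        have hmeas : volume (Set.Ioc a b \ {x : ℝ | S.IsRoot x}) = volume (Set.Ioc a b) :=
          measure_diff_null (hfin.measure_zero _)
        calc (0 : ENNReal) < volume (Set.Ioc a b) := by
              rw [Real.volume_Ioc]
              exact ENNReal.ofReal_pos.mpr (by linarith)
          _ = volume (Set.Ioc a b \ {x : ℝ | S.IsRoot x}) := hmeas.symm
          _ ≤ volume (Function.support (fun t => S.eval t * S.eval t) ∩ Set.Ioc a b) :=
              measure_mono hsub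
      · filter_upwards with x using mul_self_nonneg _
      · exact (S.continuous.mul S.continuous).intervalIntegrable a b
    exact absurd hSS hposint.ne'
  -- conclude
  refine ⟨c, fun t => ?_⟩
  have hR : R = C c * Lp := by
    have h0 : R - C c * Lp = 0 := by rw [← hS]; exact hSzero
    exact sub_eq_zero.mp h0
  have hσeval : σp.eval t = (2 * t - a - b) / s := by
    simp [hσp]
    field_simp
    ring
  calc U.derivative.eval t - (α * U.eval t + β) = R.eval t := (hReval t).symm
    _ = c * Lp.eval t := by rw [hR]; simp
    _ = c * (legendrePoly q).eval ((2 * t - a - b) / (b - a)) := by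
        rw [hLp, eval_comp, hσeval, hsdef]
end

section
/- Orthogonality property of Radau polynomials: Let q ≥ 1 and let P_q denote the q-th Legendre polynomial. Then (x+1) divides P_q(x) + P_{q+1}(x) in ℝ[x], and the quotient, the q-th Radau polynomial Q_q(x) = (P_q(x) + P_{q+1}(x))/(x+1), which is a polynomial of degree q, satisfies ∫_{−1}^{1} Q_q(x) (x+1)^p dx = 0 for every p = 1, …, q. -/
/-!
By Rodrigues' formula `P_n` is, up to a constant, the `n`-th derivative of `(x² - 1)ⁿ`, whose
lower derivatives all vanish at `±1`; integrating by parts `n` times therefore shows that `P_n` is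
orthogonal on `[-1, 1]` to every polynomial of degree `< n`. The same formula gives
`P_n(±1) = (±1)ⁿ`, so `-1` is a root of `P_q + P_{q+1}`, and
`Q_q (x + 1)^p = (P_q + P_{q+1}) (x + 1)^(p-1)` is a sum of two such orthogonal products when
`p ≤ q`.
-/

open MeasureTheory intervalIntegral Polynomial

namespace Polynomial

theorem integral_eval_derivative_mul (a b : ℝ) (u v : ℝ[X]) :
    ∫ x in a..b, (derivative u).eval x * v.eval x =
      u.eval b * v.eval b - u.eval a * v.eval a - ∫ x in a..b, u.eval x * (derivative v).eval x := by
  have hint (p r : ℝ[X]) : IntervalIntegrable (fun x => p.eval x * r.eval x) volume a b :=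
    (p.continuous.mul r.continuous).intervalIntegrable a b
  have h := integral_deriv_mul_eq_sub (fun x _ => u.hasDerivAt x) (fun x _ => v.hasDerivAt x)
    ((derivative u).continuous.intervalIntegrable a b)
    ((derivative v).continuous.intervalIntegrable a b)
  rw [integral_add (hint _ _) (hint _ _)] at h
  linarith

theorem integral_eval_iterate_derivative_mul_eq_zero {a b : ℝ} {u g : ℝ[X]} {n : ℕ}
    (hu : ∀ m < n, (derivative^[m] u).eval a = 0 ∧ (derivative^[m] u).eval b = 0)
    (hg : derivative^[n] g = 0) :
    ∫ x in a..b, (derivative^[n] u).eval x * g.eval x = 0 := by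
  induction n generalizing g with
  | zero => simp_all
  | succ n ih =>
    obtain ⟨hua, hub⟩ := hu n n.lt_succ_self
    rw [Function.iterate_succ_apply', integral_eval_derivative_mul, hua, hub,
      ih (fun m hm => hu m (hm.trans n.lt_succ_self)) hg]
    ring

section CommRing

variable {R : Type*} [CommRing R] {t : R}

theorem sq_sub_one_pow_eq (ht : t ^ 2 = 1) (n : ℕ) :
    (X ^ 2 - 1 : R[X]) ^ n = (X - C t) ^ n * (X + C t) ^ n := by
  rw [← mul_pow, mul_comm, ← sq_sub_sq, ← C_pow, ht, C_1]

theorem eval_iterate_derivative_sq_sub_one_pow_of_lt (ht : t ^ 2 = 1) {m n : ℕ} (hm : m < n) :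
    (derivative^[m] ((X ^ 2 - 1 : R[X]) ^ n)).eval t = 0 := by
  rw [← coe_aeval_eq_eval]
  exact aeval_iterate_derivative_of_lt _ n t (by simpa using sq_sub_one_pow_eq ht n) hm

theorem eval_iterate_derivative_sq_sub_one_pow_self (ht : t ^ 2 = 1) (n : ℕ) :
    (derivative^[n] ((X ^ 2 - 1 : R[X]) ^ n)).eval t = n.factorial * (2 * t) ^ n := by
  rw [← coe_aeval_eq_eval,
    aeval_iterate_derivative_self _ n t (by simpa using sq_sub_one_pow_eq ht n)]
  simp [two_mul]

end CommRing

end Polynomial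

theorem legendrePoly_eval_of_sq_eq_one {t : ℝ} (ht : t ^ 2 = 1) (n : ℕ) :
    (legendrePoly n).eval t = t ^ n := by
  rw [legendrePoly, eval_mul, eval_C, eval_iterate_derivative_sq_sub_one_pow_self ht, mul_pow]
  field_simp

theorem integral_legendrePoly_mul_eq_zero {n : ℕ} {g : ℝ[X]} (hg : g.natDegree < n) :
    ∫ x in (-1 : ℝ)..1, (legendrePoly n * g).eval x = 0 := by
  simp only [legendrePoly, eval_mul, eval_C, mul_assoc, intervalIntegral.integral_const_mul]
  rw [integral_eval_iterate_derivative_mul_eq_zero, mul_zero]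
  · exact fun m hm => ⟨eval_iterate_derivative_sq_sub_one_pow_of_lt (by norm_num) hm,
      eval_iterate_derivative_sq_sub_one_pow_of_lt (by norm_num) hm⟩
  · exact iterate_derivative_eq_zero hg

theorem natDegree_legendrePoly (n : ℕ) : (legendrePoly n).natDegree = n := by
  have hmonic : ((X ^ 2 - 1 : ℝ[X]) ^ n).Monic := by
    simpa using ((monic_X_pow_sub_C (1 : ℝ) two_ne_zero).pow n)
  have hdeg : ((X ^ 2 - 1 : ℝ[X]) ^ n).natDegree = n + n := by
    rw [natDegree_pow, ← C_1, natDegree_X_pow_sub_C]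
    ring
  have hcoeff : (derivative^[n] ((X ^ 2 - 1 : ℝ[X]) ^ n)).coeff n ≠ 0 := by
    rw [coeff_iterate_derivative, ← hdeg, hmonic.coeff_natDegree, hdeg]
    simp
  have hle := natDegree_iterate_derivative ((X ^ 2 - 1 : ℝ[X]) ^ n) n
  rw [legendrePoly, natDegree_C_mul (by positivity)]
  exact le_antisymm (by omega) (le_natDegree_of_ne_zero hcoeff)

theorem radau_orthogonality_general (q : ℕ) :
    ((Polynomial.X + Polynomial.C 1 : Polynomial ℝ) ∣
        (legendrePoly q + legendrePoly (q + 1))) ∧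
      ∀ Q : Polynomial ℝ,
        legendrePoly q + legendrePoly (q + 1) = (Polynomial.X + Polynomial.C 1) * Q →
          Q.natDegree = q ∧
            ∀ p : ℕ, 1 ≤ p → p ≤ q →
              ∫ x in (-1 : ℝ)..1, Q.eval x * (x + 1) ^ p = 0 := by
  have hroot : (legendrePoly q + legendrePoly (q + 1)).IsRoot (-1) := by
    simp only [IsRoot, eval_add, legendrePoly_eval_of_sq_eq_one (neg_one_sq (R := ℝ)), pow_succ]
    ring
  have hX : (X + C 1 : ℝ[X]) = X - C (-1) := by rw [C_neg, sub_neg_eq_add]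
  refine ⟨hX ▸ dvd_iff_isRoot.mpr hroot, fun Q hQ => ⟨?_, fun p hp hpq => ?_⟩⟩
  · have hdeg : (legendrePoly q + legendrePoly (q + 1)).natDegree = q + 1 := by
      rw [natDegree_add_eq_right_of_natDegree_lt] <;> simp [natDegree_legendrePoly]
    have hQ0 : Q ≠ 0 := by
      rintro rfl
      simp [hQ] at hdeg
    rw [hQ, (monic_X_add_C 1).natDegree_mul' hQ0, natDegree_X_add_C] at hdeg
    omega
  · obtain ⟨k, rfl⟩ := Nat.exists_eq_add_of_le' hp
    have hQp : ∀ x : ℝ, Q.eval x * (x + 1) ^ (k + 1) =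
        (legendrePoly q * (X + C 1) ^ k + legendrePoly (q + 1) * (X + C 1) ^ k).eval x := by
      intro x
      rw [← add_mul, hQ]
      simp only [eval_mul, eval_pow, eval_add, eval_X, eval_C]
      ring
    have hint (n : ℕ) : IntervalIntegrable (fun x => (legendrePoly n * (X + C 1) ^ k).eval x)
        volume (-1) 1 := (Polynomial.continuous _).intervalIntegrable _ _
    simp only [hQp, eval_add]
    rw [integral_add (hint q) (hint (q + 1)), integral_legendrePoly_mul_eq_zero,
      integral_legendrePoly_mul_eq_zero, add_zero] <;>
      rw [natDegree_pow, natDegree_X_add_C] <;> omega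

/-- Orthogonality property of Radau polynomials: `(x+1)` divides `P_q + P_{q+1}` in `ℝ[x]`,
and the quotient `Q_q = (P_q + P_{q+1})/(x+1)`, the `q`-th Radau polynomial, has degree `q`
and satisfies `∫_{−1}^{1} Q_q(x) (x+1)^p dx = 0` for `p = 1, …, q`. -/
theorem radau_orthogonality (q : ℕ) (hq : 1 ≤ q) :
    ((Polynomial.X + Polynomial.C 1 : Polynomial ℝ) ∣
        (legendrePoly q + legendrePoly (q + 1))) ∧
      ∀ Q : Polynomial ℝ,
        legendrePoly q + legendrePoly (q + 1) = (Polynomial.X + Polynomial.C 1) * Q →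
          Q.natDegree = q ∧
            ∀ p : ℕ, 1 ≤ p → p ≤ q →
              ∫ x in (-1 : ℝ)..1, Q.eval x * (x + 1) ^ p = 0 :=
  radau_orthogonality_general q
end

section
/- Simplification of the mcG(q) coefficient matrix: Let q ≥ 1, let 0 = s₀ < s₁ < ⋯ < s_q = 1 be distinct nodes in [0,1], let λ₀, …, λ_q be the corresponding Lagrange basis polynomials of degree q (λ_n(s_m) = δ_{nm}), and let v₁, …, v_q be any basis of the space of polynomials of degree ≤ q − 1. Define a_{mn} = ∫₀¹ λ_n'(t) v_m(t) dt for m = 1,…,q and n = 0,1,…,q, and let A = (a_{mn})_{m,n=1}^{q} be the q×q matrix omitting the column n = 0. Then A is invertible, and its inverse Ā = (ā_{mn}) satisfies Σ_{n=1}^{q} ā_{mn} a_{n0} = −1 for every m = 1,…,q. -/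
/-!
Since `∑ₙ λₙ = 1`, the column `a_{·0}` is minus the sum of the other columns, i.e.
`a_{·0} = A (−1, …, −1)ᵀ`, so `Ā a_{·0} = (−1, …, −1)ᵀ` once `A` is invertible.
For invertibility, `A c = 0` says that `p' ⊥ v₁, …, v_q` in `L²(0, 1)`, where
`p = ∑_{n ≥ 1} cₙ λₙ`. As `p'` has degree `< q` it lies in the span of the `vₘ`, so `p' ⊥ p'`,
hence `p' = 0`; then `p` is constant with `p(s₀) = 0`, so `p = 0` and `c = 0`.
-/

open MeasureTheory intervalIntegral Polynomial Finset

open scoped Matrix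

/-- The Lagrange basis polynomial for nodes `s : Fin m → ℝ` associated with the node `n`:
`λ_n(x) = ∏_{k ≠ n} (x − s_k)/(s_n − s_k)`. -/
noncomputable def lagrangeBasis {m : ℕ} (s : Fin m → ℝ) (n : Fin m) : Polynomial ℝ :=
  ∏ k ∈ Finset.univ.erase n,
    Polynomial.C (s n - s k)⁻¹ * (Polynomial.X - Polynomial.C (s k))

namespace Polynomial

theorem derivative_mem_degreeLT {R : Type*} [Semiring R] {p : R[X]} {n : ℕ}
    (hp : p ∈ degreeLT R (n + 1)) : derivative p ∈ degreeLT R n := by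
  rw [mem_degreeLT, degree_lt_iff_coeff_zero] at hp ⊢
  intro m hm
  rw [coeff_derivative, hp (m + 1) (by omega), zero_mul]

theorem span_range_eq_degreeLT {K : Type*} [Field K] {n : ℕ} {v : Fin n → K[X]}
    (hli : LinearIndependent K v) (hv : ∀ i, v i ∈ degreeLT K n) :
    Submodule.span K (Set.range v) = degreeLT K n := by
  have : FiniteDimensional K (degreeLT K n) := (degreeLTEquiv K n).symm.finiteDimensional
  refine Submodule.eq_of_le_of_finrank_eq (Submodule.span_le.mpr (Set.range_subset_iff.mpr hv)) ?_
  rw [finrank_span_eq_card hli, (degreeLTEquiv K n).finrank_eq, Module.finrank_fin_fun,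
    Fintype.card_fin]

end Polynomial

namespace Lagrange

variable {F ι : Type*} [Field F] [DecidableEq ι] {s : Finset ι} {v : ι → F}

theorem sum_derivative_basis (hvs : Set.InjOn v s) (hs : s.Nonempty) :
    ∑ i ∈ s, derivative (Lagrange.basis s v i) = 0 := by
  rw [← map_sum, sum_basis hvs hs, derivative_one]

theorem eq_of_derivative_interpolate_eq_zero [CharZero F] (hvs : Set.InjOn v s) {r : ι → F}
    (hd : derivative (interpolate s v r) = 0) {i j : ι} (hi : i ∈ s) (hj : j ∈ s) :
    r i = r j := by
  obtain ⟨c, hc⟩ := natDegree_eq_zero.mp (derivative_eq_zero.mp hd)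
  rw [← eval_interpolate_at_node r hvs hi, ← eval_interpolate_at_node r hvs hj, ← hc,
    eval_C, eval_C]

end Lagrange

noncomputable def intervalPairing (a b : ℝ) : ℝ[X] →ₗ[ℝ] ℝ[X] →ₗ[ℝ] ℝ :=
  LinearMap.mk₂ ℝ (fun p w => ∫ x in a..b, p.eval x * w.eval x)
    (fun p₁ p₂ w => by
      simp only [eval_add, add_mul]
      exact integral_add (Continuous.intervalIntegrable (by fun_prop) _ _)
        (Continuous.intervalIntegrable (by fun_prop) _ _))
    (fun c p w => by
      simp only [eval_smul, smul_eq_mul, mul_assoc, intervalIntegral.integral_const_mul])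
    (fun p w₁ w₂ => by
      simp only [eval_add, mul_add]
      exact integral_add (Continuous.intervalIntegrable (by fun_prop) _ _)
        (Continuous.intervalIntegrable (by fun_prop) _ _))
    (fun c p w => by
      simp only [eval_smul, smul_eq_mul, mul_left_comm, intervalIntegral.integral_const_mul])

@[simp]
theorem intervalPairing_apply (a b : ℝ) (p w : ℝ[X]) :
    intervalPairing a b p w = ∫ x in a..b, p.eval x * w.eval x :=
  rfl

theorem intervalPairing_self_pos {a b : ℝ} (hab : a < b) {p : ℝ[X]} (hp : p ≠ 0) :
    0 < intervalPairing a b p p := by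
  rw [intervalPairing_apply, integral_pos_iff_support_of_nonneg_ae
    (Filter.Eventually.of_forall fun x => mul_self_nonneg _)
    (Continuous.intervalIntegrable (by fun_prop) _ _)]
  refine ⟨hab, ?_⟩
  have hsupport : Set.Ioc a b \ {x | p.IsRoot x} ⊆
      Function.support (fun x => p.eval x * p.eval x) ∩ Set.Ioc a b :=
    fun x ⟨hx, hroot⟩ => ⟨mul_self_ne_zero.mpr hroot, hx⟩
  calc (0 : ENNReal) < volume (Set.Ioc a b \ {x | p.IsRoot x}) := by
        rw [measure_sdiff_null ((finite_setOfPred_isRoot hp).measure_zero volume), Real.volume_Ioc]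
        exact ENNReal.ofReal_pos.mpr (sub_pos.mpr hab)
    _ ≤ _ := measure_mono hsupport

theorem eq_zero_of_intervalPairing_eq_zero {a b : ℝ} (hab : a < b) {S : Set ℝ[X]} {p : ℝ[X]}
    (hp : p ∈ Submodule.span ℝ S) (horth : ∀ w ∈ S, intervalPairing a b p w = 0) :
    p = 0 := by
  have hker : Submodule.span ℝ S ≤ LinearMap.ker (intervalPairing a b p) :=
    Submodule.span_le.mpr horth
  by_contra hp0
  exact (intervalPairing_self_pos hab hp0).ne' (hker hp)

theorem Lagrange.basis_univ_eq_lagrangeBasis {m : ℕ} (s : Fin m → ℝ) (n : Fin m) :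
    Lagrange.basis univ s n = lagrangeBasis s n :=
  rfl

/-- The paper's `(a_{mn})_{m,n=1}^q`: column `n : Fin q` belongs to the node `s n.succ`. -/
noncomputable def mcGMatrix {q : ℕ} (s : Fin (q + 1) → ℝ) (v : Fin q → ℝ[X]) :
    Matrix (Fin q) (Fin q) ℝ :=
  Matrix.of fun m n => intervalPairing 0 1 (derivative (lagrangeBasis s n.succ)) (v m)

section mcGMatrix

variable {q : ℕ} {s : Fin (q + 1) → ℝ} {v : Fin q → ℝ[X]}

theorem mcGMatrix_mulVec_apply (c : Fin q → ℝ) (m : Fin q) :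
    (mcGMatrix s v *ᵥ c) m =
      intervalPairing 0 1 (derivative (Lagrange.interpolate univ s (Fin.cons 0 c))) (v m) := by
  rw [Lagrange.interpolate_apply, Fin.sum_univ_succ]
  simp only [Fin.cons_zero, Fin.cons_succ, map_zero, zero_mul, zero_add, ← smul_eq_C_mul,
    map_sum, map_smul, LinearMap.sum_apply, LinearMap.smul_apply, smul_eq_mul, Matrix.mulVec,
    dotProduct, mcGMatrix, Matrix.of_apply, Lagrange.basis_univ_eq_lagrangeBasis]
  exact Finset.sum_congr rfl fun n _ => mul_comm _ _

theorem isUnit_mcGMatrix (hs : Function.Injective s)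
    (hspan : degreeLT ℝ q ≤ Submodule.span ℝ (Set.range v)) :
    IsUnit (mcGMatrix s v) := by
  rw [← Matrix.mulVec_injective_iff_isUnit, ← Matrix.coe_mulVecLin, ← LinearMap.ker_eq_bot,
    LinearMap.ker_eq_bot']
  intro c hc
  set p := Lagrange.interpolate univ s (Fin.cons 0 c)
  have hdeg : derivative p ∈ degreeLT ℝ q := by
    refine derivative_mem_degreeLT (mem_degreeLT.mpr ?_)
    simpa only [card_univ, Fintype.card_fin] using
      Lagrange.degree_interpolate_lt (s := univ) (Fin.cons 0 c) hs.injOn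
  have horth (m : Fin q) : intervalPairing 0 1 (derivative p) (v m) = 0 := by
    rw [← mcGMatrix_mulVec_apply]
    exact congrFun hc m
  have hp : derivative p = 0 :=
    eq_zero_of_intervalPairing_eq_zero zero_lt_one (hspan hdeg) (Set.forall_mem_range.mpr horth)
  funext m
  simpa using Lagrange.eq_of_derivative_interpolate_eq_zero hs.injOn hp (mem_univ m.succ)
    (mem_univ 0)

theorem intervalPairing_derivative_lagrangeBasis_zero (hs : Function.Injective s) (m : Fin q) :
    intervalPairing 0 1 (derivative (lagrangeBasis s 0)) (v m) =
      (mcGMatrix s v *ᵥ fun _ => -1) m := by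
  have hsum := Lagrange.sum_derivative_basis hs.injOn (univ_nonempty (α := Fin (q + 1)))
  simp only [Fin.sum_univ_succ, add_eq_zero_iff_eq_neg,
    Lagrange.basis_univ_eq_lagrangeBasis] at hsum
  simp only [hsum, map_neg, map_sum, LinearMap.neg_apply, LinearMap.sum_apply, Matrix.mulVec,
    dotProduct, mcGMatrix, Matrix.of_apply, mul_neg_one, sum_neg_distrib]

end mcGMatrix

theorem mcG_matrix_simplification_general
    (q : ℕ)
    (s : Fin (q + 1) → ℝ) (hs : StrictMono s)
    (v : Fin q → Polynomial ℝ)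
    (hvdeg : ∀ m, (v m).natDegree ≤ q - 1)
    (hvbasis : LinearIndependent ℝ v)
    (A : Matrix (Fin q) (Fin q) ℝ)
    (hA : ∀ m n, A m n =
      ∫ x in (0:ℝ)..1, ((lagrangeBasis s n.succ).derivative.eval x) * (v m).eval x) :
    IsUnit A ∧ ∀ m : Fin q,
      (∑ n : Fin q, A⁻¹ m n *
        ∫ x in (0:ℝ)..1, ((lagrangeBasis s 0).derivative.eval x) * (v n).eval x) = -1 := by
  obtain rfl : A = mcGMatrix s v := Matrix.ext hA
  have hvmem (m : Fin q) : v m ∈ degreeLT ℝ q := by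
    rw [mem_degreeLT]
    exact degree_le_natDegree.trans_lt
      (by exact_mod_cast (hvdeg m).trans_lt (Nat.sub_lt m.pos one_pos))
  have hunit := isUnit_mcGMatrix hs.injective (span_range_eq_degreeLT hvbasis hvmem).ge
  refine ⟨hunit, fun m => ?_⟩
  have hinv : (mcGMatrix s v)⁻¹ * mcGMatrix s v = 1 :=
    Matrix.nonsing_inv_mul _ ((Matrix.isUnit_iff_isUnit_det _).mp hunit)
  calc _ = ((mcGMatrix s v)⁻¹ *ᵥ mcGMatrix s v *ᵥ fun _ => -1) m := by
        simp only [← intervalPairing_apply,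
          intervalPairing_derivative_lagrangeBasis_zero hs.injective]
        rfl
    _ = -1 := by rw [Matrix.mulVec_mulVec, hinv, Matrix.one_mulVec]

/-- Simplification of the mcG(q) coefficient matrix (Lemma `lem:simpl,cg`):
with `0 = s₀ < ⋯ < s_q = 1`, Lagrange basis polynomials `λ₀, …, λ_q`, and any basis
`v₁, …, v_q` of the polynomials of degree `≤ q − 1`, the matrix
`A = (a_{mn})_{m,n=1}^q`, `a_{mn} = ∫₀¹ λ_n'(t) v_m(t) dt`, is invertible and its inverse
`Ā` satisfies `Σ_{n=1}^q ā_{mn} a_{n0} = −1` for every `m`, where `a_{n0} = ∫₀¹ λ₀'(t) v_n(t) dt`. -/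
theorem mcG_matrix_simplification
    (q : ℕ) (hq : 1 ≤ q)
    (s : Fin (q + 1) → ℝ) (hs : StrictMono s)
    (hs0 : s 0 = 0) (hsq : s (Fin.last q) = 1)
    (v : Fin q → Polynomial ℝ)
    (hvdeg : ∀ m, (v m).natDegree ≤ q - 1)
    (hvbasis : LinearIndependent ℝ v)
    (A : Matrix (Fin q) (Fin q) ℝ)
    (hA : ∀ m n, A m n =
      ∫ x in (0:ℝ)..1, ((lagrangeBasis s n.succ).derivative.eval x) * (v m).eval x) :
    IsUnit A ∧ ∀ m : Fin q,
      (∑ n : Fin q, A⁻¹ m n *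
        ∫ x in (0:ℝ)..1, ((lagrangeBasis s 0).derivative.eval x) * (v n).eval x) = -1 :=
  mcG_matrix_simplification_general q s hs v hvdeg hvbasis A hA
end

section
/- Simplification of the mdG(q) coefficient matrix: Let q ≥ 0, let s₀ < s₁ < ⋯ < s_q = 1 be distinct nodes in [0,1] with s_q = 1, and let λ₀, …, λ_q be the corresponding Lagrange basis polynomials of degree q (λ_n(s_m) = δ_{nm}). Define the (q+1)×(q+1) matrix A = (a_{mn})_{m,n=0}^{q} by a_{mn} = ∫₀¹ λ_n'(t) λ_m(t) dt + λ_n(0) λ_m(0). Then A is invertible, and its inverse Ā = (ā_{mn}) satisfies Σ_{n=0}^{q} ā_{mn} λ_n(0) = 1 for every m = 0,…,q. -/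
/-!
The matrix is `a_{mn} = B(λ_n, λ_m)` for the bilinear form `B(u, v) = ∫₀¹ u' v + u(0) v(0)`.
Since `∫₀¹ p' p = (p(1)² - p(0)²) / 2`, we get `B(p, p) = (p(1)² + p(0)²) / 2`. If
`p = Σ ξ_n λ_n` with `A ξ = 0`, then `B(p, v) = 0` for every `v` of degree `≤ q`; testing
with `v = p` gives `p(0) = 0`, and then testing with `v = p'` gives `∫₀¹ p'² = 0`, so `p = 0`
and `ξ = 0`.
For the second claim, the `λ_n` sum to `1` and `B(1, v) = v(0)`, so `A 𝟙 = (λ_m(0))_m`.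
-/

open MeasureTheory intervalIntegral Polynomial Finset

open scoped Matrix

theorem Polynomial.eq_zero_of_intervalIntegral_sq_eq_zero {p : ℝ[X]} {a b : ℝ} (hab : a < b)
    (h : ∫ x in a..b, p.eval x ^ 2 = 0) : p = 0 := by
  have hae := (integral_eq_zero_iff_of_le_of_nonneg_ae hab.le
    (ae_of_all _ fun x => sq_nonneg (p.eval x))
    ((by fun_prop : Continuous fun x => p.eval x ^ 2).intervalIntegrable a b)).1 h
  have hzero := Measure.eqOn_Ioc_of_ae_eq volume hae (by fun_prop) continuousOn_const
  refine p.eq_zero_of_infinite_isRoot ((Set.Ioc_infinite hab).mono fun x hx => ?_)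
  exact pow_eq_zero_iff two_ne_zero |>.1 (hzero hx)

theorem Polynomial.integral_derivative_mul_self (p : ℝ[X]) (a b : ℝ) :
    ∫ x in a..b, p.derivative.eval x * p.eval x = (p.eval b ^ 2 - p.eval a ^ 2) / 2 := by
  rw [sub_div]
  refine integral_eq_sub_of_hasDerivAt (f := fun x => p.eval x ^ 2 / 2) (fun x _ => ?_)
    ((by fun_prop : Continuous fun x => p.derivative.eval x * p.eval x).intervalIntegrable a b)
  exact (((p.hasDerivAt x).fun_pow 2).div_const 2).congr_deriv (by ring)

noncomputable def dgForm (a b : ℝ) : ℝ[X] →ₗ[ℝ] ℝ[X] →ₗ[ℝ] ℝ :=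
  LinearMap.mk₂ ℝ
    (fun u v => (∫ x in a..b, u.derivative.eval x * v.eval x) + u.eval a * v.eval a)
    (fun u₁ u₂ v => by
      simp only [derivative_add, eval_add, add_mul]
      rw [intervalIntegral.integral_add ((by fun_prop : Continuous _).intervalIntegrable a b)
        ((by fun_prop : Continuous _).intervalIntegrable a b)]
      ring)
    (fun c u v => by
      simp only [derivative_smul, eval_smul, smul_eq_mul, mul_assoc,
        intervalIntegral.integral_const_mul]
      ring)
    (fun u v₁ v₂ => by
      simp only [eval_add, mul_add]
      rw [intervalIntegral.integral_add ((by fun_prop : Continuous _).intervalIntegrable a b)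
        ((by fun_prop : Continuous _).intervalIntegrable a b)]
      ring)
    (fun c u v => by
      simp only [eval_smul, smul_eq_mul, mul_left_comm _ c, intervalIntegral.integral_const_mul]
      ring)

theorem dgForm_apply (a b : ℝ) (u v : ℝ[X]) :
    dgForm a b u v = (∫ x in a..b, u.derivative.eval x * v.eval x) + u.eval a * v.eval a := rfl

theorem dgForm_self (a b : ℝ) (p : ℝ[X]) :
    dgForm a b p p = (p.eval b ^ 2 + p.eval a ^ 2) / 2 := by
  rw [dgForm_apply, p.integral_derivative_mul_self]
  ring

theorem dgForm_one_left (a b : ℝ) (v : ℝ[X]) : dgForm a b 1 v = v.eval a := by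
  simp [dgForm_apply]

theorem eq_zero_of_dgForm_eq_zero {a b : ℝ} (hab : a < b) {N : ℕ} {p : ℝ[X]}
    (hp : p.degree < N) (h : ∀ v : ℝ[X], v.degree < N → dgForm a b p v = 0) : p = 0 := by
  have hpa : p.eval a = 0 := by
    have := h p hp
    rw [dgForm_self] at this
    nlinarith [sq_nonneg (p.eval a), sq_nonneg (p.eval b)]
  have hp' : p.derivative = 0 := by
    refine eq_zero_of_intervalIntegral_sq_eq_zero hab ?_
    simpa [dgForm_apply, hpa, sq] using h _ (degree_derivative_le.trans_lt hp)
  rw [eq_C_of_derivative_eq_zero hp'] at hpa ⊢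
  simpa using hpa

noncomputable def dgMatrix {ι : Type*} (a b : ℝ) (e : ι → ℝ[X]) : Matrix ι ι ℝ :=
  Matrix.of fun m n => dgForm a b (e n) (e m)

theorem dgMatrix_mulVec {ι : Type*} [Fintype ι] (a b : ℝ) (e : ι → ℝ[X]) (ξ : ι → ℝ) :
    dgMatrix a b e *ᵥ ξ = fun m => dgForm a b (∑ n, ξ n • e n) (e m) := by
  ext m
  simp [dgMatrix, Matrix.mulVec, dotProduct, mul_comm]

theorem lagrangeBasis_eq {m : ℕ} (s : Fin m → ℝ) (n : Fin m) :
    lagrangeBasis s n = Lagrange.basis univ s n := rfl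

theorem interpolate_eq_sum_smul_lagrangeBasis {m : ℕ} (s : Fin m → ℝ) (ξ : Fin m → ℝ) :
    Lagrange.interpolate univ s ξ = ∑ n, ξ n • lagrangeBasis s n := by
  simp [Lagrange.interpolate_apply, lagrangeBasis_eq, smul_eq_C_mul]

theorem eq_zero_of_dgMatrix_lagrangeBasis_mulVec_eq_zero {a b : ℝ} (hab : a < b) {m : ℕ}
    {s : Fin m → ℝ} (hs : Function.Injective s) {ξ : Fin m → ℝ}
    (hξ : dgMatrix a b (lagrangeBasis s) *ᵥ ξ = 0) : ξ = 0 := by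
  have hinj : Set.InjOn s (univ : Finset (Fin m)) := hs.injOn
  have hp_basis (k : Fin m) :
      dgForm a b (Lagrange.interpolate univ s ξ) (lagrangeBasis s k) = 0 := by
    rw [interpolate_eq_sum_smul_lagrangeBasis]
    simpa only [dgMatrix_mulVec, Pi.zero_apply] using congrFun hξ k
  have hp_orth (v : ℝ[X]) (hv : v.degree < m) :
      dgForm a b (Lagrange.interpolate univ s ξ) v = 0 := by
    rw [Lagrange.eq_interpolate (f := v) hinj (by simpa using hv),
      interpolate_eq_sum_smul_lagrangeBasis s fun i => v.eval (s i)]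
    simp only [map_sum, map_smul, hp_basis, smul_zero, sum_const_zero]
  have hp : Lagrange.interpolate univ s ξ = 0 :=
    eq_zero_of_dgForm_eq_zero hab (by simpa using Lagrange.degree_interpolate_lt ξ hinj) hp_orth
  ext k
  rw [← Lagrange.eval_interpolate_at_node ξ hinj (mem_univ k), hp]
  simp

theorem isUnit_dgMatrix_lagrangeBasis {a b : ℝ} (hab : a < b) {m : ℕ} {s : Fin m → ℝ}
    (hs : Function.Injective s) : IsUnit (dgMatrix a b (lagrangeBasis s)) :=
  Matrix.mulVec_injective_iff_isUnit.1 <| (injective_iff_map_eq_zero (Matrix.mulVecLin _)).2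
    fun _ => eq_zero_of_dgMatrix_lagrangeBasis_mulVec_eq_zero hab hs

theorem dgMatrix_lagrangeBasis_mulVec_one (a b : ℝ) {m : ℕ} [NeZero m] {s : Fin m → ℝ}
    (hs : Function.Injective s) :
    dgMatrix a b (lagrangeBasis s) *ᵥ 1 = fun k => (lagrangeBasis s k).eval a := by
  have hsum : ∑ n, lagrangeBasis s n = 1 := Lagrange.sum_basis hs.injOn univ_nonempty
  simp [dgMatrix_mulVec, hsum, dgForm_one_left]

theorem mdG_matrix_simplification_general
    (q : ℕ)
    (s : Fin (q + 1) → ℝ) (hs : StrictMono s)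
    (A : Matrix (Fin (q + 1)) (Fin (q + 1)) ℝ)
    (hA : ∀ m n, A m n =
      (∫ x in (0:ℝ)..1, ((lagrangeBasis s n).derivative.eval x) * (lagrangeBasis s m).eval x)
        + (lagrangeBasis s n).eval 0 * (lagrangeBasis s m).eval 0) :
    IsUnit A ∧ ∀ m : Fin (q + 1),
      (∑ n : Fin (q + 1), A⁻¹ m n * (lagrangeBasis s n).eval 0) = 1 := by
  obtain rfl : A = dgMatrix 0 1 (lagrangeBasis s) := Matrix.ext hA
  have hunit := isUnit_dgMatrix_lagrangeBasis zero_lt_one hs.injective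
  have := hunit.invertible
  refine ⟨hunit, fun m => ?_⟩
  have h := Matrix.inv_mulVec_eq_vec (dgMatrix_lagrangeBasis_mulVec_one 0 1 hs.injective).symm
  exact congrFun h m

/-- Simplification of the mdG(q) coefficient matrix: with distinct nodes
`s₀ < ⋯ < s_q = 1` in `[0,1]` and Lagrange basis polynomials `λ₀, …, λ_q`, the matrix
`A = (a_{mn})_{m,n=0}^q`, `a_{mn} = ∫₀¹ λ_n'(t) λ_m(t) dt + λ_n(0) λ_m(0)`, is invertible
and its inverse `Ā` satisfies `Σ_{n=0}^q ā_{mn} λ_n(0) = 1` for every `m`. -/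
theorem mdG_matrix_simplification
    (q : ℕ)
    (s : Fin (q + 1) → ℝ) (hs : StrictMono s)
    (hmem : ∀ n, s n ∈ Set.Icc (0:ℝ) 1) (hsq : s (Fin.last q) = 1)
    (A : Matrix (Fin (q + 1)) (Fin (q + 1)) ℝ)
    (hA : ∀ m n, A m n =
      (∫ x in (0:ℝ)..1, ((lagrangeBasis s n).derivative.eval x) * (lagrangeBasis s m).eval x)
        + (lagrangeBasis s n).eval 0 * (lagrangeBasis s m).eval 0) :
    IsUnit A ∧ ∀ m : Fin (q + 1),
      (∑ n : Fin (q + 1), A⁻¹ m n * (lagrangeBasis s n).eval 0) = 1 :=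
  mdG_matrix_simplification_general q s hs A hA
end
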